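/- arXiv:1910.05988 — 11 statements merged into one kernel-verified Lean document; each statement's English description precedes it below -/
import Mathlib

section
/- Let (λ_n) be a sequence of positive reals and Λ_n := λ_1 + ... + λ_n. Then the sequence (Λ_n) converges (i.e. the series ∑ λ_n converges) if and only if the series ∑ λ_n/Λ_n converges. -/
/-- The sequence of partial sums `Λ_n` converges iff the series `∑ λ_n/Λ_n` converges. -/
theorem stmt_0 (w : ℕ → ℝ) (hw : ∀ n, 0 < w n) :
    Summable w ↔ Summable (fun n => w n / (∑ i ∈ Finset.range (n + 1), w i)) := by
  set S : ℕ → ℝ := fun n => ∑ i ∈ Finset.range (n + 1), w i with hS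
  have hSpos : ∀ n, 0 < S n := fun n => Finset.sum_pos (fun i _ => hw i) (by simp)
  have hSmono : ∀ ⦃a b : ℕ⦄, a ≤ b → S a ≤ S b := by
    intro a b hab
    apply Finset.sum_le_sum_of_subset_of_nonneg (Finset.range_subset_range.2 (by omega))
    intros; exact (hw _).le
  constructor
  · intro h
    apply Summable.of_nonneg_of_le _ _ (h.mul_right (w 0)⁻¹)
    · exact fun n => div_nonneg (hw n).le (hSpos n).le
    intro n
    rw [div_eq_mul_inv]
    apply mul_le_mul_of_nonneg_left _ (hw n).le
    apply inv_anti₀ (hw 0)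
    calc w 0 = S 0 := by simp [hS]
    _ ≤ S n := hSmono (Nat.zero_le n)
  · intro hf
    by_contra hns
    set P : ℕ → ℝ := fun n => ∑ i ∈ Finset.range n, w i with hP
    have hPnn : ∀ n, 0 ≤ P n := fun n => Finset.sum_nonneg (fun i _ => (hw i).le)
    have hPtop : Filter.Tendsto P Filter.atTop Filter.atTop := by
      rw [← not_summable_iff_tendsto_nat_atTop_of_nonneg (fun n => (hw n).le)]
      exact hns
    have hc : CauchySeq (fun k => ∑ i ∈ Finset.range k, w i / S i) :=
      hf.hasSum.tendsto_sum_nat.cauchySeq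
    obtain ⟨N, hN⟩ := Metric.cauchySeq_iff'.1 hc (1/2) (by norm_num)
    obtain ⟨m, hPm, hmN⟩ := ((hPtop.eventually_ge_atTop (2 * P N + 1)).and
      (Filter.eventually_ge_atTop N)).exists
    have h1 : ∑ i ∈ Finset.Ico N m, w i / S i < 1/2 := by
      have hd := hN m hmN
      rw [Real.dist_eq] at hd
      have hsum : ∑ i ∈ Finset.Ico N m, w i / S i
          = ∑ i ∈ Finset.range m, w i / S i - ∑ i ∈ Finset.range N, w i / S i :=
        Finset.sum_Ico_eq_sub _ hmN
      calc ∑ i ∈ Finset.Ico N m, w i / S i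
          ≤ |∑ i ∈ Finset.range m, w i / S i - ∑ i ∈ Finset.range N, w i / S i| := by
            rw [← hsum]; exact le_abs_self _
        _ < 1/2 := hd
    have hPm0 : 0 < P m := lt_of_lt_of_le (by linarith [hPnn N]) hPm
    have h2 : (1:ℝ)/2 < ∑ i ∈ Finset.Ico N m, w i / S i := by
      have hlow : (P m - P N) / P m ≤ ∑ i ∈ Finset.Ico N m, w i / S i := by
        have hsw : ∑ i ∈ Finset.Ico N m, w i = P m - P N := Finset.sum_Ico_eq_sub _ hmN
        rw [← hsw, Finset.sum_div]
        apply Finset.sum_le_sum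
        intro i hi
        have hSle : S i ≤ P m := by
          have : i + 1 ≤ m := (Finset.mem_Ico.1 hi).2
          exact Finset.sum_le_sum_of_subset_of_nonneg (Finset.range_subset_range.2 this)
            (fun j _ _ => (hw j).le)
        exact div_le_div_of_nonneg_left (hw i).le (hSpos i) hSle
      refine lt_of_lt_of_le ?_ hlow
      rw [div_eq_mul_inv, ← div_eq_mul_inv, lt_div_iff₀ hPm0]
      linarith
    linarith
end

section
/- Let φ : (0,1] → ℝ be continuous and monotone, and let (λ_n) be a sequence of positive reals with partial sums Λ_n → ∞ such that λ_n/Λ_n → 0. Then lim_{n→∞} ∑_{k=1}^n (λ_k/Λ_n) · φ(Λ_k/Λ_n) = ∫₀¹ φ(x) dx (where both sides are +∞ or −∞ simultaneously in the divergent case, under appropriate sign normalization; one may assume φ nonincreasing and nonnegative with the convention that the equality holds in [0,+∞]). -/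
open Filter MeasureTheory
open scoped ENNReal

/-- If `λ_n/Λ_n → 0` and `Λ_n → ∞` then
`∑_{k=1}^n (λ_k/Λ_n) φ(Λ_k/Λ_n) → ∫₀¹ φ`, as an equality in `[0,∞]`
(φ is normalized to be nonincreasing and nonnegative). -/
theorem stmt_3 (w : ℕ → ℝ) (hw : ∀ n, 0 < w n)
    (S : ℕ → ℝ) (hS : ∀ n, S n = ∑ i ∈ Finset.range (n + 1), w i)
    (h0 : Tendsto (fun n => w n / S n) atTop (nhds 0))
    (htop : Tendsto S atTop atTop)
    (φ : ℝ → ℝ) (hcont : ContinuousOn φ (Set.Ioc 0 1))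
    (hmono : AntitoneOn φ (Set.Ioc 0 1))
    (hpos : ∀ x ∈ Set.Ioc (0:ℝ) 1, 0 ≤ φ x) :
    Tendsto
      (fun n => ∑ k ∈ Finset.range (n + 1),
        ENNReal.ofReal ((w k / S n) * φ (S k / S n)))
      atTop (nhds (∫⁻ x in Set.Ioc (0:ℝ) 1, ENNReal.ofReal (φ x))) := by
  classical
  set T : ℕ → ℝ := fun k => ∑ i ∈ Finset.range k, w i with hTdef
  have hST : ∀ k, S k = T (k + 1) := fun k => hS k
  have hTmono : StrictMono T := by
    apply strictMono_nat_of_lt_succ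
    intro n
    have : T (n+1) = T n + w n := by simp [hTdef, Finset.sum_range_succ]
    rw [this]
    linarith [hw n]
  have hT0 : T 0 = 0 := by simp [hTdef]
  have hTw : ∀ k, T (k+1) = T k + w k := by
    intro k; simp [hTdef, Finset.sum_range_succ]
  have hTpos : ∀ k, 0 < T (k+1) := fun k => hT0 ▸ hTmono (Nat.succ_pos k)
  have hTnonneg : ∀ k, 0 ≤ T k := fun k => hT0 ▸ hTmono.monotone (Nat.zero_le k)
  have hSpos : ∀ n, 0 < S n := fun n => (hST n) ▸ hTpos n
  have hSmono : Monotone S := by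
    intro a b hab
    rw [hST a, hST b]
    exact hTmono.monotone (Nat.succ_le_succ hab)
  have hmem : ∀ n k, k ≤ n → T (k+1) / S n ∈ Set.Ioc (0:ℝ) 1 := by
    intro n k hk
    constructor
    · exact div_pos (hTpos k) (hSpos n)
    · rw [div_le_one (hSpos n), hST n]
      exact hTmono.monotone (Nat.succ_le_succ hk)
  -- the step functions
  set f : ℕ → ℝ → ℝ≥0∞ := fun n x => ∑ k ∈ Finset.range (n+1),
      (Set.Ioc (T k / S n) (T (k+1) / S n)).indicator
        (fun _ => ENNReal.ofReal (φ (T (k+1) / S n))) x with hf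
  set g : ℝ → ℝ≥0∞ := (Set.Ioc (0:ℝ) 1).indicator (fun x => ENNReal.ofReal (φ x)) with hg
  have hfmeas : ∀ n, Measurable (f n) := by
    intro n
    apply Finset.measurable_sum
    intro k _
    exact measurable_const.indicator measurableSet_Ioc
  -- integral of f n is the sum
  have hfeq : ∀ n, ∫⁻ x, f n x = ∑ k ∈ Finset.range (n+1),
      ENNReal.ofReal ((w k / S n) * φ (S k / S n)) := by
    intro n
    simp only [hf]
    rw [lintegral_finset_sum _ (fun k _ => measurable_const.indicator measurableSet_Ioc)]
    refine Finset.sum_congr rfl (fun k hk => ?_)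
    rw [lintegral_indicator measurableSet_Ioc, setLIntegral_const, Real.volume_Ioc]
    have hlen : T (k+1)/S n - T k/S n = w k / S n := by
      rw [div_sub_div_same, hTw k]
      ring_nf
    rw [hlen, hST k]
    rw [ENNReal.ofReal_mul (div_nonneg (hw k).le (hSpos n).le)]
    ring
  -- the key structural lemma
  have key : ∀ n, ∀ x ∈ Set.Ioc (0:ℝ) 1, ∃ k, k ≤ n ∧ x * S n ≤ T (k+1) ∧
      (∀ j, j < k → T (j+1) < x * S n) ∧ f n x = ENNReal.ofReal (φ (T (k+1) / S n)) := by
    intro n x hx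
    have hex : ∃ k, x * S n ≤ T (k+1) := by
      refine ⟨n, ?_⟩
      rw [← hST n]
      nlinarith [hSpos n, hx.2]
    refine ⟨Nat.find hex, Nat.find_le ?_, Nat.find_spec hex, ?_, ?_⟩
    · rw [← hST n]; nlinarith [hSpos n, hx.2]
    · intro j hj
      exact lt_of_not_ge (Nat.find_min hex hj)
    · have hmemx : x ∈ Set.Ioc (T (Nat.find hex) / S n) (T (Nat.find hex + 1) / S n) := by
        constructor
        · rcases Nat.eq_zero_or_pos (Nat.find hex) with h1 | h1
          · rw [h1, hT0, zero_div]; exact hx.1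
          · obtain ⟨m, hm⟩ : ∃ m, Nat.find hex = m + 1 := ⟨Nat.find hex - 1, by omega⟩
            rw [div_lt_iff₀ (hSpos n), hm]
            exact lt_of_not_ge (Nat.find_min hex (by omega))
        · exact (le_div_iff₀ (hSpos n)).2 (Nat.find_spec hex)
      have hz : ∀ j ∈ Finset.range (n+1), j ≠ Nat.find hex →
          (Set.Ioc (T j / S n) (T (j + 1) / S n)).indicator
            (fun _ => ENNReal.ofReal (φ (T (j + 1) / S n))) x = 0 := by
        intro j _ hj
        apply Set.indicator_of_notMem
        intro hxmem
        rcases lt_or_gt_of_ne hj with h1 | h1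
        · have := lt_of_not_ge (Nat.find_min hex h1)
          have hx2 : x * S n ≤ T (j+1) := (le_div_iff₀ (hSpos n)).1 hxmem.2
          linarith
        · have hTj : T (Nat.find hex + 1) ≤ T j := hTmono.monotone h1
          have hx1 : T j < x * S n := (div_lt_iff₀ (hSpos n)).1 hxmem.1
          have := Nat.find_spec hex
          linarith
      have hmem' : Nat.find hex ∈ Finset.range (n+1) :=
        Finset.mem_range_succ_iff.2 (Nat.find_le (by rw [← hST n]; nlinarith [hSpos n, hx.2]))
      simp only [hf]
      rw [Finset.sum_eq_single_of_mem (Nat.find hex) hmem' hz, Set.indicator_of_mem hmemx]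
  -- f n ≤ g pointwise
  have hfg : ∀ n x, f n x ≤ g x := by
    intro n x
    by_cases hx : x ∈ Set.Ioc (0:ℝ) 1
    · obtain ⟨k, hk1, hk2, _, hk4⟩ := key n x hx
      rw [hk4, hg, Set.indicator_of_mem hx]
      apply ENNReal.ofReal_le_ofReal
      exact hmono hx (hmem n k hk1) ((le_div_iff₀ (hSpos n)).2 hk2)
    · rw [hg, Set.indicator_of_notMem hx, hf]
      apply le_of_eq
      apply Finset.sum_eq_zero
      intro k hk
      apply Set.indicator_of_notMem
      intro hxmem
      apply hx
      constructor
      · exact lt_of_le_of_lt (div_nonneg (hTnonneg k) (hSpos n).le) hxmem.1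
      · exact le_trans hxmem.2 (hmem n k (Finset.mem_range_succ_iff.1 hk)).2
  -- pointwise convergence f n x → g x
  have hlim : ∀ x, Tendsto (fun n => f n x) atTop (nhds (g x)) := by
    intro x
    by_cases hx : x ∈ Set.Ioc (0:ℝ) 1
    · choose k hk1 hk2 hk3 hk4 using fun n => key n x hx
      have hxS : Tendsto (fun n => x * S n) atTop atTop :=
        htop.const_mul_atTop hx.1
      have hkt : Tendsto k atTop atTop := by
        rw [tendsto_atTop]
        intro K
        filter_upwards [hxS.eventually_ge_atTop (T (K+1))] with n hn
        have h1 : T (K+1) ≤ T (k n + 1) := le_trans hn (hk2 n)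
        have := hTmono.le_iff_le.1 h1
        omega
      have hq : Tendsto (fun n => T (k n + 1) / S n) atTop (nhds x) := by
        have hup : Tendsto (fun n => x + w (k n) / S (k n)) atTop (nhds x) := by
          have h1 : Tendsto (fun n => w (k n) / S (k n)) atTop (nhds 0) := h0.comp hkt
          simpa using tendsto_const_nhds.add h1
        refine tendsto_of_tendsto_of_tendsto_of_le_of_le' tendsto_const_nhds hup ?_ ?_
        · filter_upwards with n
          exact (le_div_iff₀ (hSpos n)).2 (hk2 n)
        · filter_upwards [hkt.eventually_ge_atTop 1] with n hn
          obtain ⟨m, hm⟩ : ∃ m, k n = m + 1 := ⟨k n - 1, by omega⟩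
          have h1 : T (k n) < x * S n := by
            rw [hm]; exact hk3 n m (by omega)
          have h2 : T (k n + 1) ≤ x * S n + w (k n) := by
            rw [hTw (k n)]; linarith
          have h3 : T (k n + 1) / S n ≤ x + w (k n) / S n := by
            rw [div_le_iff₀ (hSpos n), add_mul, div_mul_cancel₀ _ (hSpos n).ne']
            exact h2
          have h4 : w (k n) / S n ≤ w (k n) / S (k n) := by
            apply div_le_div_of_nonneg_left (hw (k n)).le (hSpos (k n)) (hSmono (hk1 n))
          linarith
      have hφ : Tendsto (fun n => φ (T (k n + 1) / S n)) atTop (nhds (φ x)) := by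
        have hmem' : ∀ n, T (k n + 1) / S n ∈ Set.Ioc (0:ℝ) 1 := fun n => hmem n (k n) (hk1 n)
        exact (hcont x hx).tendsto.comp
          (tendsto_nhdsWithin_iff.2 ⟨hq, Filter.Eventually.of_forall hmem'⟩)
      have hofreal : Tendsto (fun n => ENNReal.ofReal (φ (T (k n + 1) / S n))) atTop
          (nhds (ENNReal.ofReal (φ x))) :=
        (ENNReal.continuous_ofReal.tendsto _).comp hφ
      have hgx : g x = ENNReal.ofReal (φ x) := Set.indicator_of_mem hx _
      rw [hgx]
      exact hofreal.congr (fun n => (hk4 n).symm)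
    · have hgx : g x = 0 := Set.indicator_of_notMem hx _
      have hfx : ∀ n, f n x = 0 := by
        intro n
        simp only [hf]
        apply Finset.sum_eq_zero
        intro k hk
        apply Set.indicator_of_notMem
        intro hxmem
        apply hx
        constructor
        · exact lt_of_le_of_lt (div_nonneg (hTnonneg k) (hSpos n).le) hxmem.1
        · exact le_trans hxmem.2 (hmem n k (Finset.mem_range_succ_iff.1 hk)).2
      rw [hgx]
      simp only [hfx]
      exact tendsto_const_nhds
  -- the integral of g is the RHS
  have hI : ∫⁻ x, g x = ∫⁻ x in Set.Ioc (0:ℝ) 1, ENNReal.ofReal (φ x) := by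
    rw [hg, lintegral_indicator measurableSet_Ioc]
  -- assemble
  have main : Tendsto (fun n => ∫⁻ x, f n x) atTop (nhds (∫⁻ x, g x)) := by
    refine tendsto_of_le_liminf_of_limsup_le ?_ ?_
    · calc ∫⁻ x, g x = ∫⁻ x, liminf (fun n => f n x) atTop := by
            apply lintegral_congr
            intro x
            exact ((hlim x).liminf_eq).symm
        _ ≤ liminf (fun n => ∫⁻ x, f n x) atTop := lintegral_liminf_le hfmeas
    · refine limsup_le_of_le ?_ ?_
      · isBoundedDefault
      · exact Filter.Eventually.of_forall (fun n => lintegral_mono (fun x => hfg n x))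
  rw [← hI]
  exact main.congr hfeq
end

section
/- Let φ : (0,1] → ℝ be continuous and monotone, and (λ_n) be positive reals with Λ_n → ∞ and λ_n/Λ_n → η for some η ∈ (0,1). Then lim_{n→∞} ∑_{k=1}^n (λ_k/Λ_n) · φ(Λ_k/Λ_n) = ∑_{k=0}^∞ η(1−η)^k φ((1−η)^k), with the convention that both sides can be infinite simultaneously. -/
/-!
With `x_k = S_k / S_n`, the `k`-th summand is `(x_k - x_{k-1}) φ(x_k)`, a lower Riemann sum of
the antitone `φ` on `(x_{k-1}, x_k]`. Since `w_n / S_n → η`, we get `S_{n-j} / S_n → (1-η)^j`, so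
the `j`-th summand counted from the top tends to the `j`-th term `η(1-η)^j φ((1-η)^j)` of the
series; this gives the lower bound. For the upper bound, all but the last `m + 1` summands are
bounded by `∫₀^{(1-η)^m} φ`, and comparing `φ` on the geometric intervals
`((1-η)^{i+1}, (1-η)^i]` bounds that integral by `(1-η)⁻¹` times the tail of the series after `m`.
-/

open Filter MeasureTheory Topology Set
open scoped ENNReal

theorem sum_range_succ_eq_sum_range_sub_add_sum_reflect {M : Type*} [AddCommMonoid M]
    (f : ℕ → M) {m n : ℕ} (hmn : m ≤ n) :
    ∑ k ∈ Finset.range (n + 1), f k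
      = ∑ k ∈ Finset.range (n - m), f k + ∑ j ∈ Finset.range (m + 1), f (n - j) := by
  rw [← Finset.sum_range_reflect f (n + 1), ← Finset.sum_range_reflect f (n - m),
    show n + 1 = m + 1 + (n - m) by omega, Finset.sum_range_add, add_comm]
  congr 1 <;> refine Finset.sum_congr rfl fun j hj => ?_ <;>
    simp only [Finset.mem_range] at hj <;> congr 1 <;> omega

theorem tendsto_sum_range_of_tendsto_reflect {f : ℕ → ℕ → ℝ≥0∞} {L : ℕ → ℝ≥0∞} {C : ℝ≥0∞}
    (hC : C ≠ ⊤) (hf : ∀ j, Tendsto (fun n => f n (n - j)) atTop (𝓝 (L j)))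
    (htail : ∀ m, ∀ᶠ n in atTop,
      ∑ k ∈ Finset.range (n - m), f n k ≤ C * ∑' j, L (j + (m + 1))) :
    Tendsto (fun n => ∑ k ∈ Finset.range (n + 1), f n k) atTop (𝓝 (∑' j, L j)) := by
  have hsplit : ∀ m, ∀ᶠ n in atTop, ∑ k ∈ Finset.range (n + 1), f n k
      = ∑ k ∈ Finset.range (n - m), f n k + ∑ j ∈ Finset.range (m + 1), f n (n - j) := fun m =>
    eventually_atTop.2 ⟨m, fun n hn => sum_range_succ_eq_sum_range_sub_add_sum_reflect _ hn⟩
  have hlast : ∀ m, Tendsto (fun n => ∑ j ∈ Finset.range (m + 1), f n (n - j)) atTop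
      (𝓝 (∑ j ∈ Finset.range (m + 1), L j)) := fun m => tendsto_finsetSum _ fun j _ => hf j
  have hpartial := (ENNReal.tendsto_nat_tsum L).comp (tendsto_add_atTop_nat 1)
  refine tendsto_of_le_liminf_of_limsup_le ?_ ?_
  · refine le_of_tendsto' hpartial fun m => ?_
    rw [Function.comp_apply, ← (hlast m).liminf_eq]
    exact liminf_le_liminf ((hsplit m).mono fun n hn => hn ▸ le_add_self)
  by_cases htop : ∑' j, L j = ⊤
  · rw [htop]; exact le_top
  have hbound : ∀ m, limsup (fun n => ∑ k ∈ Finset.range (n + 1), f n k) atTop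
      ≤ C * ∑' j, L (j + (m + 1)) + ∑ j ∈ Finset.range (m + 1), L j := fun m =>
    calc limsup (fun n => ∑ k ∈ Finset.range (n + 1), f n k) atTop
        ≤ limsup (fun n => C * ∑' j, L (j + (m + 1))
            + ∑ j ∈ Finset.range (m + 1), f n (n - j)) atTop :=
          limsup_le_limsup <| by
            filter_upwards [hsplit m, htail m] with n hs ht
            rw [hs]; gcongr
      _ = _ := (tendsto_const_nhds.add (hlast m)).limsup_eq
  have htail_zero := (ENNReal.tendsto_sum_nat_add L htop).comp (tendsto_add_atTop_nat 1)
  have hlim := (ENNReal.Tendsto.const_mul htail_zero (Or.inr hC)).add hpartial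
  rw [mul_zero, zero_add] at hlim
  exact ge_of_tendsto hlim (Eventually.of_forall hbound)

theorem tendsto_div_sub_of_tendsto_div_pred {𝕜 : Type*} [NormedField 𝕜] {S : ℕ → 𝕜} {r : 𝕜}
    (hS : ∀ n, S n ≠ 0) (h : Tendsto (fun n => S (n - 1) / S n) atTop (𝓝 r)) (j : ℕ) :
    Tendsto (fun n => S (n - j) / S n) atTop (𝓝 (r ^ j)) := by
  induction j with
  | zero => simp [div_self (hS _)]
  | succ j ih =>
    rw [pow_succ']
    refine ((h.comp (tendsto_sub_atTop_nat j)).mul ih).congr fun n => ?_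
    simp only [Function.comp_apply, Nat.sub_sub, div_mul_div_cancel₀ (hS _)]

section AntitoneOn

variable {φ : ℝ → ℝ} {a b : ℝ}

theorem ofReal_mul_le_setLIntegral_Ioc (hφ : AntitoneOn φ (Ioc a b)) :
    ENNReal.ofReal (b - a) * ENNReal.ofReal (φ b) ≤ ∫⁻ t in Ioc a b, ENNReal.ofReal (φ t) := by
  rcases le_or_gt b a with hba | hab
  · simp [ENNReal.ofReal_of_nonpos (sub_nonpos.2 hba)]
  calc ENNReal.ofReal (b - a) * ENNReal.ofReal (φ b)
      = ∫⁻ _ in Ioc a b, ENNReal.ofReal (φ b) := by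
        rw [setLIntegral_const, Real.volume_Ioc, mul_comm]
    _ ≤ ∫⁻ t in Ioc a b, ENNReal.ofReal (φ t) :=
        setLIntegral_mono' measurableSet_Ioc fun t ht =>
          ENNReal.ofReal_le_ofReal (hφ ht (right_mem_Ioc.2 hab) ht.2)

theorem setLIntegral_Ioc_le_ofReal_mul (hφ : AntitoneOn φ (Icc a b)) :
    ∫⁻ t in Ioc a b, ENNReal.ofReal (φ t) ≤ ENNReal.ofReal (b - a) * ENNReal.ofReal (φ a) := by
  calc ∫⁻ t in Ioc a b, ENNReal.ofReal (φ t) ≤ ∫⁻ _ in Ioc a b, ENNReal.ofReal (φ a) :=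
        setLIntegral_mono' measurableSet_Ioc fun t ht =>
          ENNReal.ofReal_le_ofReal
            (hφ (left_mem_Icc.2 (ht.1.le.trans ht.2)) (Ioc_subset_Icc_self ht) ht.1.le)
    _ = _ := by rw [setLIntegral_const, Real.volume_Ioc, mul_comm]

theorem sum_ofReal_mul_le_setLIntegral_Ioc {x : ℕ → ℝ} (hx : Monotone x) {K : ℕ}
    (hφ : AntitoneOn φ (Ioc (x 0) (x K))) :
    ∑ k ∈ Finset.range K, ENNReal.ofReal (x (k + 1) - x k) * ENNReal.ofReal (φ (x (k + 1)))
      ≤ ∫⁻ t in Ioc (x 0) (x K), ENNReal.ofReal (φ t) := by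
  induction K with
  | zero => simp
  | succ K ih =>
    rw [Finset.sum_range_succ, ← Ioc_union_Ioc_eq_Ioc (hx (Nat.zero_le K)) (hx K.le_succ),
      lintegral_union measurableSet_Ioc (Ioc_disjoint_Ioc_of_le le_rfl)]
    have hsub : ∀ {c d}, x 0 ≤ c → d ≤ x (K + 1) → Ioc c d ⊆ Ioc (x 0) (x (K + 1)) :=
      fun hc hd => Ioc_subset_Ioc hc hd
    exact add_le_add (ih (hφ.mono (hsub le_rfl (hx K.le_succ))))
      (ofReal_mul_le_setLIntegral_Ioc (hφ.mono (hsub (hx (Nat.zero_le K)) le_rfl)))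

end AntitoneOn

theorem Ioc_zero_pow_subset_iUnion {r : ℝ} (hr0 : 0 < r) (hr1 : r < 1) (m : ℕ) :
    Ioc 0 (r ^ m) ⊆ ⋃ j : ℕ, Ioc (r ^ (j + (m + 1))) (r ^ (j + m)) := by
  intro t ht
  obtain ⟨n, hn1, hn⟩ :=
    exists_nat_pow_near_of_lt_one ht.1 (ht.2.trans (pow_le_one₀ hr0.le hr1.le)) hr0 hr1
  have hmn : m < n + 1 := (pow_lt_pow_iff_right_of_lt_one₀ hr0 hr1).1 (hn1.trans_le ht.2)
  refine mem_iUnion.2 ⟨n - m, ?_⟩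
  rw [show n - m + (m + 1) = n + 1 by omega, show n - m + m = n by omega]
  exact ⟨hn1, hn⟩

theorem setLIntegral_Ioc_zero_pow_le_tsum {φ : ℝ → ℝ} (hφ : AntitoneOn φ (Ioc 0 1)) {r : ℝ}
    (hr0 : 0 < r) (hr1 : r < 1) (m : ℕ) :
    ∫⁻ t in Ioc 0 (r ^ m), ENNReal.ofReal (φ t) ≤ ENNReal.ofReal r⁻¹ *
      ∑' j, ENNReal.ofReal ((1 - r) * r ^ (j + (m + 1)) * φ (r ^ (j + (m + 1)))) := by
  have hpiece : ∀ i, Icc (r ^ (i + 1)) (r ^ i) ⊆ Ioc 0 1 := fun i =>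
    (Icc_subset_Ioc_iff (pow_le_pow_of_le_one hr0.le hr1.le i.le_succ)).2
      ⟨pow_pos hr0 _, pow_le_one₀ hr0.le hr1.le⟩
  calc ∫⁻ t in Ioc 0 (r ^ m), ENNReal.ofReal (φ t)
      ≤ ∑' j, ∫⁻ t in Ioc (r ^ (j + (m + 1))) (r ^ (j + m)), ENNReal.ofReal (φ t) :=
        (lintegral_mono_set (Ioc_zero_pow_subset_iUnion hr0 hr1 m)).trans
          (lintegral_iUnion_le _ _)
    _ ≤ ∑' j, ENNReal.ofReal (r ^ (j + m) - r ^ (j + (m + 1))) *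
          ENNReal.ofReal (φ (r ^ (j + (m + 1)))) :=
        ENNReal.tsum_le_tsum fun j => setLIntegral_Ioc_le_ofReal_mul (hφ.mono (hpiece _))
    _ = _ := by
        rw [← ENNReal.tsum_mul_left]
        refine tsum_congr fun j => ?_
        have hr : r ^ (j + m) - r ^ (j + (m + 1)) = r⁻¹ * ((1 - r) * r ^ (j + (m + 1))) := by
          field_simp; ring
        rw [hr, ENNReal.ofReal_mul (inv_nonneg.2 hr0.le), mul_assoc,
          ENNReal.ofReal_mul (p := (1 - r) * r ^ (j + (m + 1))) (by have := hr1.le; positivity)]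

section PartialSums

variable {w S : ℕ → ℝ}

theorem tendsto_div_pred_of_tendsto_div {η : ℝ}
    (hS : ∀ n, S n = ∑ i ∈ Finset.range (n + 1), w i) (hS0 : ∀ n, S n ≠ 0)
    (h0 : Tendsto (fun n => w n / S n) atTop (𝓝 η)) :
    Tendsto (fun n => S (n - 1) / S n) atTop (𝓝 (1 - η)) := by
  refine (tendsto_const_nhds.sub h0).congr' (eventually_atTop.2 ⟨1, fun n hn => ?_⟩)
  obtain ⟨n, rfl⟩ := Nat.exists_eq_add_of_le' hn
  show _ = S (n + 1 - 1) / S (n + 1)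
  rw [Nat.add_sub_cancel, one_sub_div (hS0 _), hS (n + 1), Finset.sum_range_succ, hS n,
    add_sub_cancel_right]

theorem tendsto_weight_div_mul_reflect {φ : ℝ → ℝ} {s : Set ℝ} {η x : ℝ} {j : ℕ}
    (hS0 : ∀ n, S n ≠ 0) (h0 : Tendsto (fun n => w n / S n) atTop (𝓝 η))
    (hratio : Tendsto (fun n => S (n - j) / S n) atTop (𝓝 x))
    (hmem : ∀ n, S (n - j) / S n ∈ s) (hφ : ContinuousWithinAt φ s x) :
    Tendsto (fun n => w (n - j) / S n * φ (S (n - j) / S n)) atTop (𝓝 (η * x * φ x)) := by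
  have hweight : Tendsto (fun n => w (n - j) / S n) atTop (𝓝 (η * x)) :=
    ((h0.comp (tendsto_sub_atTop_nat j)).mul hratio).congr fun n =>
      div_mul_div_cancel₀ (hS0 _)
  exact hweight.mul
    (hφ.tendsto.comp (tendsto_nhdsWithin_iff.2 ⟨hratio, Eventually.of_forall hmem⟩))

theorem sum_ofReal_weight_mul_le_setLIntegral {φ : ℝ → ℝ} (hw : ∀ n, 0 ≤ w n)
    (hS : ∀ n, S n = ∑ i ∈ Finset.range (n + 1), w i) (hφ : AntitoneOn φ (Ioc 0 1))
    {n K : ℕ} (hK : K ≤ n + 1) :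
    ∑ k ∈ Finset.range K, ENNReal.ofReal (w k / S n * φ (S k / S n))
      ≤ ∫⁻ t in Ioc 0 ((∑ i ∈ Finset.range K, w i) / S n), ENNReal.ofReal (φ t) := by
  set x : ℕ → ℝ := fun k => (∑ i ∈ Finset.range k, w i) / S n
  have hSn : 0 ≤ S n := hS n ▸ Finset.sum_nonneg fun i _ => hw i
  have hx : Monotone x := monotone_nat_of_le_succ fun k =>
    div_le_div_of_nonneg_right (by simp [Finset.sum_range_succ, hw k]) hSn
  have hxK : x K ≤ 1 := div_le_one_of_le₀ (hS n ▸ Finset.sum_le_sum_of_subset_of_nonneg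
    (Finset.range_subset_range.2 hK) fun i _ _ => hw i) hSn
  have hx0 : x 0 = 0 := by simp [x]
  have h := sum_ofReal_mul_le_setLIntegral_Ioc hx (K := K)
    (hφ.mono (hx0 ▸ Ioc_subset_Ioc_right hxK))
  rw [hx0] at h
  refine le_of_eq_of_le (Finset.sum_congr rfl fun k _ => ?_) h
  have hincr : x (k + 1) - x k = w k / S n := by
    simp only [x, Finset.sum_range_succ, ← sub_div, add_sub_cancel_left]
  have hsucc : x (k + 1) = S k / S n := by simp only [x, hS]
  rw [hincr, hsucc, ← ENNReal.ofReal_mul (div_nonneg (hw k) hSn)]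

end PartialSums

theorem stmt_4_general (w : ℕ → ℝ) (hw : ∀ n, 0 < w n)
    (S : ℕ → ℝ) (hS : ∀ n, S n = ∑ i ∈ Finset.range (n + 1), w i)
    (η : ℝ) (hη0 : 0 < η) (hη1 : η < 1)
    (h0 : Tendsto (fun n => w n / S n) atTop (nhds η))
    (φ : ℝ → ℝ) (hcont : ContinuousOn φ (Set.Ioc 0 1))
    (hmono : AntitoneOn φ (Set.Ioc 0 1)) :
    Tendsto
      (fun n => ∑ k ∈ Finset.range (n + 1),
        ENNReal.ofReal ((w k / S n) * φ (S k / S n)))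
      atTop
      (nhds (∑' k : ℕ, ENNReal.ofReal (η * (1 - η) ^ k * φ ((1 - η) ^ k)))) := by
  have hr0 : 0 < 1 - η := sub_pos.2 hη1
  have hr1 : 1 - η < 1 := sub_lt_self 1 hη0
  have hSpos : ∀ n, 0 < S n := fun n =>
    hS n ▸ Finset.sum_pos (fun i _ => hw i) Finset.nonempty_range_add_one
  have hS0 : ∀ n, S n ≠ 0 := fun n => (hSpos n).ne'
  have hSmono : Monotone S := monotone_nat_of_le_succ fun n => by
    rw [hS (n + 1), Finset.sum_range_succ, ← hS]
    exact le_add_of_nonneg_right (hw _).le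
  have hratio :=
    tendsto_div_sub_of_tendsto_div_pred hS0 (tendsto_div_pred_of_tendsto_div hS hS0 h0)
  refine tendsto_sum_range_of_tendsto_reflect (C := ENNReal.ofReal (1 - η)⁻¹)
    ENNReal.ofReal_ne_top (fun j => ?_) (fun m => ?_)
  · have hmem : ∀ n, S (n - j) / S n ∈ Ioc 0 1 := fun n =>
      ⟨div_pos (hSpos _) (hSpos n), div_le_one_of_le₀ (hSmono (n.sub_le j)) (hSpos n).le⟩
    exact (ENNReal.continuous_ofReal.tendsto _).comp <| tendsto_weight_div_mul_reflect hS0 h0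
      (hratio j) hmem (hcont _ ⟨pow_pos hr0 j, pow_le_one₀ hr0.le hr1.le⟩)
  · filter_upwards [eventually_ge_atTop (m + 1), (hratio (m + 1)).eventually_le_const
      (pow_lt_pow_right_of_lt_one₀ hr0 hr1 m.lt_succ_self)] with n hn hle
    calc _ ≤ ∫⁻ t in Ioc 0 ((∑ i ∈ Finset.range (n - m), w i) / S n), ENNReal.ofReal (φ t) :=
          sum_ofReal_weight_mul_le_setLIntegral (fun n => (hw n).le) hS hmono (by omega)
      _ ≤ ∫⁻ t in Ioc 0 ((1 - η) ^ m), ENNReal.ofReal (φ t) := by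
          refine lintegral_mono_set (Ioc_subset_Ioc_right ?_)
          rwa [show n - m = n - (m + 1) + 1 by omega, ← hS]
      _ ≤ _ := by
          simpa only [sub_sub_cancel] using setLIntegral_Ioc_zero_pow_le_tsum hmono hr0 hr1 m

/-- If `λ_n/Λ_n → η ∈ (0,1)` and `Λ_n → ∞` then
`∑_{k=1}^n (λ_k/Λ_n) φ(Λ_k/Λ_n) → ∑_{k=0}^∞ η(1-η)^k φ((1-η)^k)`,
as an equality in `[0,∞]` (φ normalized nonincreasing and nonnegative). -/
theorem stmt_4 (w : ℕ → ℝ) (hw : ∀ n, 0 < w n)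
    (S : ℕ → ℝ) (hS : ∀ n, S n = ∑ i ∈ Finset.range (n + 1), w i)
    (η : ℝ) (hη0 : 0 < η) (hη1 : η < 1)
    (h0 : Tendsto (fun n => w n / S n) atTop (nhds η))
    (htop : Tendsto S atTop atTop)
    (φ : ℝ → ℝ) (hcont : ContinuousOn φ (Set.Ioc 0 1))
    (hmono : AntitoneOn φ (Set.Ioc 0 1))
    (hpos : ∀ x ∈ Set.Ioc (0:ℝ) 1, 0 ≤ φ x) :
    Tendsto
      (fun n => ∑ k ∈ Finset.range (n + 1),
        ENNReal.ofReal ((w k / S n) * φ (S k / S n)))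
      atTop
      (nhds (∑' k : ℕ, ENNReal.ofReal (η * (1 - η) ^ k * φ ((1 - η) ^ k)))) :=
  stmt_4_general w hw S hS η hη0 hη1 h0 φ hcont hmono
end

section
/- Let p < 1 be real and (λ_n) be positive reals with Λ_n → ∞ and λ_n/Λ_n → η ∈ [0,1). Then lim_{n→∞} ∑_{k=1}^n (λ_k/Λ_n)·(Λ_k/Λ_n)^{−p} equals 1/(1−p) if η = 0, and equals η/(1 − (1−η)^{1−p}) if η ∈ (0,1). -/
open Filter Topology Asymptotics

/-! With `q = 1 - p`, the sum equals `A n / S n ^ q` where `A n = ∑_{k ≤ n} w k * S k ^ (-p)`.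
By Stolz–Cesàro its limit is that of the ratio of increments
`w n * S n ^ (-p) / (S n ^ q - S (n - 1) ^ q) = t n / (1 - (1 - t n) ^ q)`, where `t n = w n / S n → η`.
For `η ≠ 0` this is continuity; for `η = 0` the ratio tends to the reciprocal of the derivative `q`
of `x ↦ 1 - (1 - x) ^ q` at `0`. -/

theorem tendsto_div_of_tendsto_sub_div_sub {A B : ℕ → ℝ} (hB : ∀ n, B n < B (n + 1))
    (hBtop : Tendsto B atTop atTop) {L : ℝ}
    (h : Tendsto (fun n => (A (n + 1) - A n) / (B (n + 1) - B n)) atTop (𝓝 L)) :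
    Tendsto (fun n => A n / B n) atTop (𝓝 L) := by
  -- Stolz–Cesàro: summing `ΔA - L ΔB = o(ΔB)` gives `A - L B = o(B)`.
  have hb : ∀ n, 0 < B (n + 1) - B n := fun n => sub_pos.2 (hB n)
  have hstep : (fun n => A (n + 1) - A n - L * (B (n + 1) - B n)) =o[atTop]
      fun n => B (n + 1) - B n := by
    rw [isLittleO_iff_tendsto fun n hn => absurd hn (hb n).ne']
    simpa [sub_div, mul_div_cancel_right₀ _ (hb _).ne'] using h.sub_const L
  have htel : ∀ n, ∑ i ∈ Finset.range n, (A (i + 1) - A i - L * (B (i + 1) - B i)) =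
      A n - A 0 - L * (B n - B 0) := fun n => by
    rw [Finset.sum_sub_distrib, ← Finset.mul_sum, Finset.sum_range_sub, Finset.sum_range_sub]
  have hsum := hstep.sum_range (fun n => (hb n).le) <| by
    simp only [Finset.sum_range_sub]
    exact tendsto_atTop_add_const_right _ (-B 0) hBtop
  simp only [htel, Finset.sum_range_sub] at hsum
  have hconst : ∀ c : ℝ, (fun _ => c) =o[atTop] B := fun c =>
    isLittleO_const_left.2 <| Or.inr <| tendsto_norm_atTop_atTop.comp hBtop
  have hmain : (fun n => A n - L * B n) =o[atTop] B :=
    ((hsum.trans_isBigO ((isBigO_refl B atTop).sub (hconst _).isBigO)).add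
      (hconst (A 0 - L * B 0))).congr_left fun n => by ring
  have hBpos : ∀ᶠ n in atTop, 0 < B n := hBtop.eventually_gt_atTop 0
  rw [isLittleO_iff_tendsto' (hBpos.mono fun n hn h0 => absurd h0 hn.ne')] at hmain
  rw [← zero_add L]
  refine (hmain.add_const L).congr' ?_
  filter_upwards [hBpos] with n hn
  rw [sub_div, mul_div_cancel_right₀ _ hn.ne', sub_add_cancel]

theorem tendsto_div_one_sub_one_sub_rpow_nhdsNE_zero {q : ℝ} (hq : q ≠ 0) :
    Tendsto (fun x : ℝ => x / (1 - (1 - x) ^ q)) (𝓝[≠] 0) (𝓝 q⁻¹) := by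
  have hderiv : HasDerivAt (fun x : ℝ => 1 - (1 - x) ^ q) q 0 := by
    simpa using (((hasDerivAt_id (0 : ℝ)).const_sub 1).rpow_const
      (p := q) (Or.inl (by norm_num))).const_sub 1
  refine ((hasDerivAt_iff_tendsto_slope.1 hderiv).inv₀ hq).congr fun x => ?_
  simp [slope_def_field]

theorem tendsto_div_one_sub_one_sub_rpow {ι : Type*} {l : Filter ι} {t : ι → ℝ} {η q : ℝ}
    (hq : q ≠ 0) (hη : η < 1) (ht : Tendsto t l (𝓝 η)) (ht0 : ∀ᶠ i in l, t i ≠ 0) :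
    Tendsto (fun i => t i / (1 - (1 - t i) ^ q)) l
      (𝓝 (if η = 0 then q⁻¹ else η / (1 - (1 - η) ^ q))) := by
  split_ifs with hη0
  · subst hη0
    exact (tendsto_div_one_sub_one_sub_rpow_nhdsNE_zero hq).comp
      (tendsto_nhdsWithin_of_tendsto_nhds_of_eventually_within _ ht ht0)
  · have hden : 1 - (1 - η) ^ q ≠ 0 := by
      rw [sub_ne_zero, ne_comm]
      intro h
      have := (Real.rpow_left_inj (by linarith) zero_le_one hq).1 (h.trans (Real.one_rpow q).symm)
      exact hη0 (by linarith)
    refine ht.div (tendsto_const_nhds.sub ?_) hden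
    exact (Real.continuousAt_rpow_const _ _ (Or.inl (by linarith))).tendsto.comp
      (tendsto_const_nhds.sub ht)

theorem div_rpow_sub_rpow_eq {u s : ℝ} (hs : 0 < s) (hus : u ≤ s) (p : ℝ) :
    u * s ^ (-p) / (s ^ (1 - p) - (s - u) ^ (1 - p)) = u / s / (1 - (1 - u / s) ^ (1 - p)) := by
  rw [one_sub_div hs.ne', Real.div_rpow (by linarith) hs.le,
    Real.rpow_sub hs, Real.rpow_one, Real.rpow_neg hs.le]
  field_simp

theorem div_mul_div_rpow_neg {x y s : ℝ} (hy : 0 ≤ y) (hs : 0 < s) (p : ℝ) :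
    x / s * (y / s) ^ (-p) = x * y ^ (-p) / s ^ (1 - p) := by
  rw [Real.div_rpow hy hs.le, Real.rpow_sub hs, Real.rpow_one, Real.rpow_neg hs.le]
  field_simp

theorem stmt_6_general (w : ℕ → ℝ) (hw : ∀ n, 0 < w n)
    (S : ℕ → ℝ) (hS : ∀ n, S n = ∑ i ∈ Finset.range (n + 1), w i)
    (p : ℝ) (hp : p < 1)
    (η : ℝ) (hη1 : η < 1)
    (h0 : Tendsto (fun n => w n / S n) atTop (nhds η))
    (htop : Tendsto S atTop atTop) :
    Tendsto
      (fun n => ∑ k ∈ Finset.range (n + 1),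
        (w k / S n) * Real.rpow (S k / S n) (-p))
      atTop
      (nhds (if η = 0 then 1 / (1 - p)
        else η / (1 - Real.rpow (1 - η) (1 - p)))) := by
  have hSpos : ∀ n, 0 < S n := fun n =>
    hS n ▸ Finset.sum_pos (fun i _ => hw i) Finset.nonempty_range_add_one
  have hSsucc : ∀ n, S n = S (n + 1) - w (n + 1) := fun n => by
    rw [hS, hS, Finset.sum_range_succ _ (n + 1), add_sub_cancel_right]
  have hq : 0 < 1 - p := sub_pos.2 hp
  have hratio := tendsto_div_one_sub_one_sub_rpow hq.ne' hη1 (h0.comp (tendsto_add_atTop_nat 1))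
    (Eventually.of_forall fun n => (div_pos (hw _) (hSpos _)).ne')
  have hstolz := tendsto_div_of_tendsto_sub_div_sub
    (A := fun n => ∑ k ∈ Finset.range (n + 1), w k * S k ^ (-p)) (B := fun n => S n ^ (1 - p))
    (fun n => Real.rpow_lt_rpow (hSpos n).le (by linarith [hSsucc n, hw (n + 1)]) hq)
    ((tendsto_rpow_atTop hq).comp htop)
    (hratio.congr fun n => by
      rw [Finset.sum_range_succ _ (n + 1), add_sub_cancel_left, hSsucc n,
        div_rpow_sub_rpow_eq (hSpos _) (by linarith [hSsucc n, hSpos n])]; rfl)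
  simp only [Real.rpow_eq_pow, one_div]
  refine hstolz.congr fun n => ?_
  rw [Finset.sum_div]
  exact Finset.sum_congr rfl fun k _ => (div_mul_div_rpow_neg (hSpos k).le (hSpos n) p).symm

/-- If `p < 1`, `Λ_n → ∞` and `λ_n/Λ_n → η ∈ [0,1)`, then
`∑_{k=1}^n (λ_k/Λ_n)(Λ_k/Λ_n)^{-p}` tends to `1/(1-p)` when `η = 0` and to
`η/(1-(1-η)^{1-p})` when `η ∈ (0,1)`. -/
theorem stmt_6 (w : ℕ → ℝ) (hw : ∀ n, 0 < w n)
    (S : ℕ → ℝ) (hS : ∀ n, S n = ∑ i ∈ Finset.range (n + 1), w i)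
    (p : ℝ) (hp : p < 1)
    (η : ℝ) (hη0 : 0 ≤ η) (hη1 : η < 1)
    (h0 : Tendsto (fun n => w n / S n) atTop (nhds η))
    (htop : Tendsto S atTop atTop) :
    Tendsto
      (fun n => ∑ k ∈ Finset.range (n + 1),
        (w k / S n) * Real.rpow (S k / S n) (-p))
      atTop
      (nhds (if η = 0 then 1 / (1 - p)
        else η / (1 - Real.rpow (1 - η) (1 - p)))) :=
  stmt_6_general w hw S hS p hp η hη1 h0 htop
end

section
/- Let f : (0,∞) → ℝ be concave with sign(f(x)) = sign(x−1) for all x > 0, and suppose x ↦ f(1/x) is integrable over (0,1]. Then for every q ∈ (0,1) and x > 0, the series F(x,q) := ∑_{k=0}^∞ q^k f(q^{−k} x) converges, and satisfies (q/(1−q)) ∫₀^{1/q} f(x/t) dt ≤ F(x,q) ≤ (1/(1−q)) ∫₀¹ f(x/t) dt. -/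
/-!
Concavity and positivity of `f` on `(1, ∞)` force `f` to be nondecreasing on `(0, ∞)`, so
`g t = f (x / t)` is nonincreasing there; it is integrable near `0` as a rescaling of
`t ↦ f (1 / t)`. Comparing `g` with its endpoint values on a block `(q^(k+1), q^k]` gives
`(1 - q) q^k g(q^k) ≤ ∫_{(q^(k+1), q^k]} g ≤ (1 - q) q^k g(q^(k+1)) / q`.
These blocks tile `(0, 1]` and their dilates by `1 / q` tile `(0, 1 / q]`; summing over `k` gives
the two estimates, and summability follows by squeezing `q^k g(q^k)` between the integrals over
neighbouring blocks.
-/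

open MeasureTheory Set Filter

theorem ConcaveOn.monotoneOn_of_eventually_le {f : ℝ → ℝ} {a C : ℝ}
    (hf : ConcaveOn ℝ (Ioi a) f) (hC : ∀ᶠ z in atTop, C ≤ f z) : MonotoneOn f (Ioi a) := by
  intro u hu v hv huv
  rcases huv.eq_or_lt with rfl | huv
  · exact le_rfl
  -- slopes to the right of `v` are `≥ (C - f v) / (z - v) → 0` and `≤` the slope on `[u, v]`
  have hslope : ∀ᶠ z in atTop, (C - f v) / (z - v) ≤ (f v - f u) / (v - u) := by
    filter_upwards [hC, eventually_gt_atTop v] with z hCz hvz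
    calc (C - f v) / (z - v) ≤ (f z - f v) / (z - v) := by gcongr
      _ ≤ (f v - f u) / (v - u) :=
        hf.slope_anti_adjacent hu (mem_Ioi.2 ((mem_Ioi.1 hv).trans hvz)) huv hvz
  have hlim : Tendsto (fun z => (C - f v) / (z - v)) atTop (nhds 0) :=
    tendsto_const_nhds.div_atTop (tendsto_atTop_add_const_right _ _ tendsto_id)
  have := le_of_tendsto hlim hslope
  rwa [le_div_iff₀ (sub_pos.2 huv), zero_mul, sub_nonneg] at this

theorem MonotoneOn.antitoneOn_comp_div {f : ℝ → ℝ} (hf : MonotoneOn f (Ioi 0)) {x : ℝ}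
    (hx : 0 < x) : AntitoneOn (fun t => f (x / t)) (Ioi 0) := fun _ hs _ ht hst =>
  hf (div_pos hx ht) (div_pos hx hs) (div_le_div_of_nonneg_left hx.le hs hst)

theorem IntegrableOn.comp_div_Ioc {E : Type*} [NormedAddCommGroup E] {h : ℝ → E} {b c : ℝ}
    (hh : IntegrableOn h (Ioc 0 b)) (hc : 0 < c) :
    IntegrableOn (fun t => h (t / c)) (Ioc 0 (b * c)) := by
  rw [← integrable_indicator_iff measurableSet_Ioc] at hh ⊢
  refine (hh.comp_div hc.ne').congr (ae_of_all _ fun t => ?_)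
  simp only [indicator_apply, mem_Ioc, div_pos_iff_of_pos_right hc, div_le_iff₀ hc]

theorem Summable.of_le_of_le {ι : Type*} {l u x : ι → ℝ} (hl : Summable l) (hu : Summable u)
    (hlx : l ≤ x) (hxu : x ≤ u) : Summable x := by
  have : Summable (x - l) := (hu.sub hl).of_nonneg_of_le (fun i => sub_nonneg.2 (hlx i))
    (fun i => sub_le_sub_right (hxu i) _)
  simpa using this.add hl

section

variable {g : ℝ → ℝ} {a b c p q s t : ℝ}

theorem AntitoneOn.integrableOn_Ioc_of_integrableOn_Ioc (hg : AntitoneOn g (Ioi a)) (hab : a < b)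
    (hb : IntegrableOn g (Ioc a b)) : IntegrableOn g (Ioc a c) := by
  rcases le_total c b with hcb | hbc
  · exact hb.mono_set (Ioc_subset_Ioc_right hcb)
  · rw [← Ioc_union_Ioc_eq_Ioc hab.le hbc]
    refine hb.union (IntegrableOn.mono_set ?_ Ioc_subset_Icc_self)
    exact (hg.mono fun t ht => hab.trans_le ht.1).integrableOn_isCompact isCompact_Icc

theorem hasSum_setIntegral_Ioc_geom (hq0 : 0 < q) (hq1 : q < 1)
    (hc : 0 < c) (hg : IntegrableOn g (Ioc 0 c)) :
    HasSum (fun k : ℕ => ∫ t in Ioc (c * q ^ (k + 1)) (c * q ^ k), g t)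
      (∫ t in Ioc 0 c, g t) := by
  have hunion : (⋃ k : ℕ, Ioc (c * q ^ (k + 1)) (c * q ^ k)) = Ioc 0 c := by
    ext t
    simp only [mem_iUnion, mem_Ioc]
    constructor
    · rintro ⟨k, hk1, hk2⟩
      exact ⟨lt_of_le_of_lt (by positivity) hk1,
        hk2.trans (mul_le_of_le_one_right hc.le (pow_le_one₀ hq0.le hq1.le))⟩
    · rintro ⟨ht0, htc⟩
      obtain ⟨k, hk1, hk2⟩ := exists_nat_pow_near_of_lt_one (div_pos ht0 hc)
        ((div_le_one hc).2 htc) hq0 hq1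
      exact ⟨k, by rwa [lt_div_iff₀' hc] at hk1, by rwa [div_le_iff₀' hc] at hk2⟩
  have hanti : Antitone fun k : ℕ => c * q ^ k := fun m n hmn =>
    mul_le_mul_of_nonneg_left (pow_le_pow_of_le_one hq0.le hq1.le hmn) hc.le
  rw [← hunion] at hg ⊢
  exact hasSum_integral_iUnion (fun _ => measurableSet_Ioc)
    (by simpa [Order.succ_eq_add_one] using hanti.pairwise_disjoint_on_Ioc_succ) hg

theorem AntitoneOn.mul_le_setIntegral_Ioc (hg : AntitoneOn g (Icc s t)) (hst : s ≤ t) :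
    (t - s) * g t ≤ ∫ u in Ioc s t, g u := by
  have := setIntegral_mono_on (μ := volume) (integrableOn_const measure_Ioc_lt_top.ne)
    ((hg.integrableOn_isCompact isCompact_Icc).mono_set Ioc_subset_Icc_self) measurableSet_Ioc
    fun u hu => hg (Ioc_subset_Icc_self hu) (right_mem_Icc.2 hst) hu.2
  simpa [Real.volume_Ioc, hst, mul_comm] using this

theorem AntitoneOn.setIntegral_Ioc_le_mul (hg : AntitoneOn g (Icc s t)) (hst : s ≤ t) :
    ∫ u in Ioc s t, g u ≤ (t - s) * g s := by
  have := setIntegral_mono_on (μ := volume)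
    ((hg.integrableOn_isCompact isCompact_Icc).mono_set Ioc_subset_Icc_self)
    (integrableOn_const measure_Ioc_lt_top.ne) measurableSet_Ioc
    fun u hu => hg (left_mem_Icc.2 hst) (Ioc_subset_Icc_self hu) hu.1.le
  simpa [Real.volume_Ioc, hst, mul_comm] using this

theorem AntitoneOn.mul_le_setIntegral_Ioc_mul (hg : AntitoneOn g (Ioi 0)) (hq0 : 0 < q)
    (hq1 : q < 1) (hp : 0 < p) : (1 - q) * (p * g p) ≤ ∫ t in Ioc (q * p) p, g t := by
  have hqp : q * p ≤ p := mul_le_of_le_one_left hp.le hq1.le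
  have := (hg.mono fun t ht => (mul_pos hq0 hp).trans_le ht.1).mul_le_setIntegral_Ioc hqp
  linarith

theorem AntitoneOn.mul_setIntegral_Ioc_div_le (hg : AntitoneOn g (Ioi 0)) (hq0 : 0 < q)
    (hq1 : q < 1) (hp : 0 < p) : q * ∫ t in Ioc p (p / q), g t ≤ (1 - q) * (p * g p) := by
  have hpq : p ≤ p / q := le_div_self hp.le hq0 hq1.le
  have := (hg.mono fun t ht => hp.trans_le ht.1).setIntegral_Ioc_le_mul hpq
  calc q * ∫ t in Ioc p (p / q), g t ≤ q * ((p / q - p) * g p) := by gcongr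
    _ = (1 - q) * (p * g p) := by field_simp

theorem AntitoneOn.summable_geom_mul (hg : AntitoneOn g (Ioi 0)) (hint : IntegrableOn g (Ioc 0 1))
    (hq0 : 0 < q) (hq1 : q < 1) : Summable fun k : ℕ => q ^ k * g (q ^ k) := by
  set b : ℕ → ℝ := fun k => ∫ t in Ioc (q ^ (k + 1)) (q ^ k), g t
  have hb : Summable b := by
    simpa only [one_mul] using (hasSum_setIntegral_Ioc_geom hq0 hq1 one_pos hint).summable
  have hlow (k : ℕ) : (1 - q) * (q ^ (k + 1) * g (q ^ (k + 1))) ≤ b (k + 1) := by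
    simpa only [b, ← pow_succ'] using hg.mul_le_setIntegral_Ioc_mul hq0 hq1 (pow_pos hq0 (k + 1))
  have hup (k : ℕ) : q * b k ≤ (1 - q) * (q ^ (k + 1) * g (q ^ (k + 1))) := by
    simpa only [b, pow_succ, mul_div_cancel_right₀ _ hq0.ne'] using
      hg.mul_setIntegral_Ioc_div_le hq0 hq1 (pow_pos hq0 (k + 1))
  have := (hb.mul_left q).of_le_of_le ((summable_nat_add_iff 1).2 hb) hup hlow
  exact (summable_nat_add_iff 1).1 ((summable_mul_left_iff (sub_pos.2 hq1).ne').1 this)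

theorem AntitoneOn.mul_tsum_geom_mul_le (hg : AntitoneOn g (Ioi 0))
    (hint : IntegrableOn g (Ioc 0 1)) (hq0 : 0 < q) (hq1 : q < 1) :
    (1 - q) * ∑' k : ℕ, q ^ k * g (q ^ k) ≤ ∫ t in Ioc 0 1, g t := by
  have hb := hasSum_setIntegral_Ioc_geom hq0 hq1 one_pos hint
  simp only [one_mul] at hb
  refine hasSum_le (fun k => ?_) ((hg.summable_geom_mul hint hq0 hq1).hasSum.mul_left _) hb
  simpa only [← pow_succ'] using hg.mul_le_setIntegral_Ioc_mul hq0 hq1 (pow_pos hq0 k)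

theorem AntitoneOn.mul_setIntegral_le_mul_tsum_geom_mul (hg : AntitoneOn g (Ioi 0))
    (hint : IntegrableOn g (Ioc 0 (1 / q))) (hq0 : 0 < q) (hq1 : q < 1) :
    q * ∫ t in Ioc 0 (1 / q), g t ≤ (1 - q) * ∑' k : ℕ, q ^ k * g (q ^ k) := by
  have hint1 : IntegrableOn g (Ioc 0 1) :=
    hint.mono_set (Ioc_subset_Ioc_right (one_le_one_div hq0 hq1.le))
  have hb := (hasSum_setIntegral_Ioc_geom hq0 hq1 (one_div_pos.2 hq0) hint).mul_left q
  refine hasSum_le (fun k => ?_) hb ((hg.summable_geom_mul hint1 hq0 hq1).hasSum.mul_left _)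
  have hk : 1 / q * q ^ (k + 1) = q ^ k := by rw [pow_succ]; field_simp
  simpa only [hk, one_div_mul_eq_div] using hg.mul_setIntegral_Ioc_div_le hq0 hq1 (pow_pos hq0 k)

end

theorem stmt_8_general (f : ℝ → ℝ) (hconc : ConcaveOn ℝ (Set.Ioi 0) f)
    (hposf : ∀ x : ℝ, 1 < x → 0 < f x)
    (hint : IntegrableOn (fun t => f (1 / t)) (Set.Ioc 0 1)) :
    ∀ q : ℝ, 0 < q → q < 1 → ∀ x : ℝ, 0 < x →
      Summable (fun k : ℕ => q ^ k * f (x / q ^ k)) ∧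
      (q / (1 - q)) * ∫ t in Set.Ioc (0:ℝ) (1 / q), f (x / t) ≤
        (∑' k : ℕ, q ^ k * f (x / q ^ k)) ∧
      (∑' k : ℕ, q ^ k * f (x / q ^ k)) ≤
        (1 / (1 - q)) * ∫ t in Set.Ioc (0:ℝ) 1, f (x / t) := by
  intro q hq0 hq1 x hx
  have hmono : MonotoneOn f (Ioi 0) := hconc.monotoneOn_of_eventually_le
    ((eventually_gt_atTop 1).mono fun z hz => (hposf z hz).le)
  have hanti : AntitoneOn (fun t => f (x / t)) (Ioi 0) := hmono.antitoneOn_comp_div hx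
  have hint_x : IntegrableOn (fun t => f (x / t)) (Ioc 0 x) := by
    simpa only [one_div_div, one_mul] using IntegrableOn.comp_div_Ioc hint hx
  have hint_q : IntegrableOn (fun t => f (x / t)) (Ioc 0 (1 / q)) :=
    hanti.integrableOn_Ioc_of_integrableOn_Ioc hx hint_x
  have hint_1 : IntegrableOn (fun t => f (x / t)) (Ioc 0 1) :=
    hanti.integrableOn_Ioc_of_integrableOn_Ioc hx hint_x
  have h1q : 0 < 1 - q := sub_pos.2 hq1
  refine ⟨hanti.summable_geom_mul hint_1 hq0 hq1, ?_, ?_⟩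
  · rw [div_mul_eq_mul_div, div_le_iff₀ h1q, mul_comm _ (1 - q)]
    exact hanti.mul_setIntegral_le_mul_tsum_geom_mul hint_q hq0 hq1
  · rw [one_div_mul_eq_div, le_div_iff₀ h1q, mul_comm]
    exact hanti.mul_tsum_geom_mul_le hint_1 hq0 hq1

/-- Convergence and two-sided integral estimates for
`F(x,q) = ∑_{k=0}^∞ q^k f(q^{-k} x)`. -/
theorem stmt_8 (f : ℝ → ℝ) (hconc : ConcaveOn ℝ (Set.Ioi 0) f)
    (hneg : ∀ x : ℝ, 0 < x → x < 1 → f x < 0)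
    (hone : f 1 = 0)
    (hposf : ∀ x : ℝ, 1 < x → 0 < f x)
    (hint : IntegrableOn (fun t => f (1 / t)) (Set.Ioc 0 1)) :
    ∀ q : ℝ, 0 < q → q < 1 → ∀ x : ℝ, 0 < x →
      Summable (fun k : ℕ => q ^ k * f (x / q ^ k)) ∧
      (q / (1 - q)) * ∫ t in Set.Ioc (0:ℝ) (1 / q), f (x / t) ≤
        (∑' k : ℕ, q ^ k * f (x / q ^ k)) ∧
      (∑' k : ℕ, q ^ k * f (x / q ^ k)) ≤
        (1 / (1 - q)) * ∫ t in Set.Ioc (0:ℝ) 1, f (x / t) :=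
  stmt_8_general f hconc hposf hint
end

section
/- Let f : (0,∞) → ℝ be concave with sign(f(x)) = sign(x−1), and suppose x ↦ f(1/x) is integrable over (0,1]. For fixed q ∈ (0,1), the function x ↦ F(x,q) := ∑_{k=0}^∞ q^k f(q^{−k} x) has a unique zero on (0,∞), and this zero lies in the open interval (0,1). -/
/-!
Concavity together with `f ≥ 0` near `+∞` forces `f` to be nondecreasing. Hence `t ↦ f (1 / t)` is
nonincreasing on `(0, 1]`, and the `k`-th term of the series is at most `x / (1 - q)` times the
integral of `f (1 / t)` over `(q ^ (k + 1) / x, q ^ k / x]` (an interval of length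
`(1 - q) q ^ k / x`); so the series converges. Its sum `F` is concave, nonnegative on `[1, ∞)`
(hence nondecreasing) and `F 1 > 0`, while `F (q x) = f (q x) + q F x` gives
`F (q ^ n) ≤ f q + q ^ n F 1 < 0` for large `n`. The intermediate value theorem yields a zero
in `(0, 1)`; a second zero would contradict concavity below `1` and monotonicity above it.
-/

open MeasureTheory Set Filter Topology

theorem ConcaveOn.monotoneOn_of_eventually_nonneg {f : ℝ → ℝ} {a : ℝ}
    (hf : ConcaveOn ℝ (Ioi a) f) (h : ∀ᶠ x in atTop, 0 ≤ f x) : MonotoneOn f (Ioi a) := by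
  intro x hx y hy hxy
  rcases hxy.eq_or_lt with rfl | hxy
  · rfl
  by_contra! hyx
  set s := (f x - f y) / (y - x) with hs
  have hs_pos : 0 < s := div_pos (by linarith) (by linarith)
  obtain ⟨z, hz_nonneg, hyz, hz_far⟩ :=
    (h.and ((eventually_gt_atTop y).and (eventually_gt_atTop (y + f y / s)))).exists
  have hslope := hf.slope_anti_adjacent hx (lt_trans hy hyz) hxy hyz
  rw [show (f y - f x) / (y - x) = -s by rw [hs]; ring, div_le_iff₀ (by linarith)] at hslope
  have hfar : f y < s * (z - y) := by
    simpa [mul_div_cancel₀ _ hs_pos.ne'] using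
      mul_lt_mul_of_pos_left (show f y / s < z - y by linarith) hs_pos
  linarith

theorem summable_geom_mul_apply_geom_of_antitoneOn {g : ℝ → ℝ} (hg : AntitoneOn g (Ioc 0 1))
    (hg0 : ∀ t ∈ Ioc 0 1, 0 ≤ g t) (hint : IntegrableOn g (Ioc 0 1)) {q c : ℝ} (hq0 : 0 < q)
    (hq1 : q < 1) (hc0 : 0 < c) (hc1 : c ≤ 1) :
    Summable fun k : ℕ => c * q ^ k * g (c * q ^ k) := by
  set u : ℕ → ℝ := fun k => c * q ^ k with hu
  have hu_pos (k : ℕ) : 0 < u k := by positivity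
  have hu_anti : Antitone u := fun i j hij =>
    mul_le_mul_of_nonneg_left (pow_le_pow_of_le_one hq0.le hq1.le hij) hc0.le
  have hu_le_one (k : ℕ) : u k ≤ 1 := (hu_anti (Nat.zero_le k)).trans (by simpa [hu] using hc1)
  set s : ℕ → Set ℝ := fun k => Ioc (u (k + 1)) (u k)
  have hs_sub (k : ℕ) : s k ⊆ Ioc 0 1 :=
    Ioc_subset_Ioc (hu_pos _).le (hu_le_one k)
  have hs_disj : Pairwise (Function.onFun Disjoint s) := by
    simpa [Order.succ_eq_add_one] using hu_anti.pairwise_disjoint_on_Ioc_succ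
  have hpieces : Summable fun k => ∫ t in s k, g t :=
    (hasSum_integral_iUnion (fun _ => measurableSet_Ioc) hs_disj
      (hint.mono_set (iUnion_subset hs_sub))).summable
  refine Summable.of_nonneg_of_le (fun k => mul_nonneg (hu_pos k).le
    (hg0 _ ⟨hu_pos k, hu_le_one k⟩)) (fun k => ?_) (hpieces.mul_left (1 - q)⁻¹)
  have hgap : u k - u (k + 1) = (1 - q) * u k := by simp only [hu, pow_succ]; ring
  have hpiece : g (u k) * (u k - u (k + 1)) ≤ ∫ t in s k, g t := by
    have := setIntegral_ge_of_const_le_real (μ := volume) measurableSet_Ioc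
      measure_Ioc_lt_top.ne
      (fun t ht => hg ⟨(hu_pos _).trans ht.1, ht.2.trans (hu_le_one k)⟩
        ⟨hu_pos k, hu_le_one k⟩ ht.2) (hint.mono_set (hs_sub k))
    rwa [Real.volume_real_Ioc_of_le (hu_anti (Nat.le_succ k))] at this
  rw [hgap] at hpiece
  rw [le_inv_mul_iff₀ (by linarith)]
  linarith

theorem concaveOn_tsum {ι : Type*} {s : Set ℝ} {g : ι → ℝ → ℝ} (hs : Convex ℝ s)
    (hg : ∀ i, ConcaveOn ℝ s (g i)) (hsum : ∀ x ∈ s, Summable fun i => g i x) :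
    ConcaveOn ℝ s fun x => ∑' i, g i x := by
  refine ⟨hs, fun x hx y hy a b ha hb hab => ?_⟩
  simp only [smul_eq_mul]
  have hax := (hsum x hx).mul_left a
  have hby := (hsum y hy).mul_left b
  rw [← tsum_mul_left, ← tsum_mul_left, ← hax.tsum_add hby]
  exact Summable.tsum_le_tsum (fun i => (hg i).2 hx hy ha hb hab) (hax.add hby)
    (hsum _ (hs hx hy ha hb hab))

theorem ConcaveOn.eq_of_apply_eq_zero {s : Set ℝ} {F : ℝ → ℝ} (hF : ConcaveOn ℝ s F)
    (hmono : MonotoneOn F s) {w : ℝ} (hw : w ∈ s) (hFw : 0 < F w) {x y : ℝ} (hx : x ∈ s)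
    (hy : y ∈ s) (hFx : F x = 0) (hFy : F y = 0) : x = y := by
  wlog hxy : x ≤ y generalizing x y
  · exact (this hy hx hFy hFx (le_of_not_ge hxy)).symm
  refine hxy.eq_or_lt.resolve_right fun hxy => ?_
  rcases lt_or_ge y w with hyw | hwy
  · have hy_mem : y ∈ openSegment ℝ x w := by
      rw [openSegment_eq_Ioo (hxy.trans hyw)]
      exact ⟨hxy, hyw⟩
    linarith [hF.left_lt_of_lt_right hx hw hy_mem (hFy ▸ hFw)]
  · linarith [hmono hw hy hwy]

theorem summable_pow_mul_apply_div_pow {f : ℝ → ℝ} (hf : MonotoneOn f (Ioi 0))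
    (hf_nonneg : ∀ y, 1 ≤ y → 0 ≤ f y) (hint : IntegrableOn (fun t => f (1 / t)) (Ioc 0 1))
    {q x : ℝ} (hq0 : 0 < q) (hq1 : q < 1) (hx : 0 < x) :
    Summable fun k : ℕ => q ^ k * f (x / q ^ k) := by
  obtain ⟨K, hK⟩ := exists_pow_lt_of_lt_one hx hq1
  rw [← summable_nat_add_iff K]
  have hg : AntitoneOn (fun t => f (1 / t)) (Ioc 0 1) := fun s hs t ht hst =>
    hf (by simpa using ht.1) (by simpa using hs.1) (one_div_le_one_div_of_le hs.1 hst)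
  have hg0 (t : ℝ) (ht : t ∈ Ioc 0 1) : 0 ≤ f (1 / t) :=
    hf_nonneg _ (one_le_one_div ht.1 ht.2)
  have hc : q ^ K / x ≤ 1 := (div_le_one hx).2 hK.le
  refine ((summable_geom_mul_apply_geom_of_antitoneOn hg hg0 hint hq0 hq1 (by positivity)
    hc).mul_left x).congr fun k => ?_
  have hqk : q ^ (k + K) = q ^ K / x * q ^ k * x := by field_simp; ring
  have harg : x / (q ^ K / x * q ^ k * x) = 1 / (q ^ K / x * q ^ k) := by field_simp
  rw [hqk, harg]
  ring

noncomputable def dilationSeries (f : ℝ → ℝ) (q x : ℝ) : ℝ := ∑' k : ℕ, q ^ k * f (x / q ^ k)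

section dilationSeries

variable {f : ℝ → ℝ} {q : ℝ}

theorem dilationSeries_mul_left (hq : q ≠ 0) {x : ℝ}
    (hsum : Summable fun k : ℕ => q ^ k * f (q * x / q ^ k)) :
    dilationSeries f q (q * x) = f (q * x) + q * dilationSeries f q x := by
  rw [dilationSeries, hsum.tsum_eq_zero_add, dilationSeries, ← tsum_mul_left]
  congr 1
  · simp
  · refine tsum_congr fun k => ?_
    rw [pow_succ', mul_div_mul_left _ _ hq]
    ring

theorem concaveOn_dilationSeries (hf : ConcaveOn ℝ (Ioi 0) f) (hq : 0 < q)
    (hsum : ∀ x, 0 < x → Summable fun k : ℕ => q ^ k * f (x / q ^ k)) :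
    ConcaveOn ℝ (Ioi 0) (dilationSeries f q) := by
  refine concaveOn_tsum (convex_Ioi 0) (fun k => ?_) hsum
  have hk : 0 < q ^ k := pow_pos hq k
  have := (hf.comp_linearMap ((q ^ k)⁻¹ • LinearMap.id)).subset (fun x hx => ?_) (convex_Ioi 0)
  · simpa [div_eq_inv_mul] using this.smul hk.le
  · simp only [mem_preimage, LinearMap.smul_apply, LinearMap.id_apply, smul_eq_mul, mem_Ioi]
    exact mul_pos (inv_pos.2 hk) hx

theorem dilationSeries_nonneg (hf : ∀ y, 1 ≤ y → 0 ≤ f y) (hq0 : 0 < q) (hq1 : q ≤ 1) {x : ℝ}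
    (hx : 1 ≤ x) : 0 ≤ dilationSeries f q x :=
  tsum_nonneg fun k => mul_nonneg (pow_pos hq0 k).le
    (hf _ ((one_le_div₀ (pow_pos hq0 k)).2 ((pow_le_one₀ hq0.le hq1).trans hx)))

theorem dilationSeries_one_pos (hf_nonneg : ∀ y, 1 ≤ y → 0 ≤ f y)
    (hf_pos : ∀ y, 1 < y → 0 < f y) (hq0 : 0 < q) (hq1 : q < 1)
    (hsum : Summable fun k : ℕ => q ^ k * f (1 / q ^ k)) : 0 < dilationSeries f q 1 := by
  refine hsum.tsum_pos (fun k => ?_) 1 ?_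
  · exact mul_nonneg (pow_pos hq0 k).le
      (hf_nonneg _ ((one_le_div₀ (pow_pos hq0 k)).2 (pow_le_one₀ hq0.le hq1.le)))
  · rw [pow_one]
    exact mul_pos hq0 (hf_pos _ ((one_lt_div hq0).2 hq1))

theorem exists_dilationSeries_neg (hf : MonotoneOn f (Ioi 0)) (hfq : f q < 0) (hq0 : 0 < q)
    (hq1 : q < 1) (hsum : ∀ x, 0 < x → Summable fun k : ℕ => q ^ k * f (x / q ^ k)) :
    ∃ a ∈ Ioo (0 : ℝ) 1, dilationSeries f q a < 0 := by
  have hrec (x : ℝ) (hx : 0 < x) :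
      dilationSeries f q (q * x) = f (q * x) + q * dilationSeries f q x :=
    dilationSeries_mul_left hq0.ne' (hsum _ (mul_pos hq0 hx))
  have hbound (n : ℕ) :
      dilationSeries f q (q ^ (n + 1)) ≤ f q + q ^ (n + 1) * dilationSeries f q 1 := by
    induction n with
    | zero => simpa using (hrec 1 one_pos).le
    | succ n ih =>
      have hfqn : f (q * q ^ (n + 1)) ≤ f q :=
        hf (mem_Ioi.2 (by positivity)) hq0
          (mul_le_of_le_one_right hq0.le (pow_le_one₀ hq0.le hq1.le))
      rw [pow_succ' q (n + 1), hrec _ (by positivity)]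
      nlinarith [mul_le_mul_of_nonneg_left ih hq0.le]
  have hlim : Tendsto (fun n : ℕ => f q + q ^ (n + 1) * dilationSeries f q 1) atTop
      (𝓝 (f q + 0 * dilationSeries f q 1)) :=
    (((tendsto_pow_atTop_nhds_zero_of_lt_one hq0.le hq1).comp
      (tendsto_add_atTop_nat 1)).mul_const _).const_add _
  rw [zero_mul, add_zero] at hlim
  obtain ⟨n, hn⟩ := (hlim.eventually (gt_mem_nhds hfq)).exists
  exact ⟨q ^ (n + 1), ⟨by positivity, pow_lt_one₀ hq0.le hq1 n.succ_ne_zero⟩,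
    (hbound n).trans_lt hn⟩

end dilationSeries

/-- For fixed `q ∈ (0,1)`, `x ↦ F(x,q) = ∑_{k=0}^∞ q^k f(q^{-k} x)` has a unique
zero on `(0,∞)`, and this zero lies in `(0,1)`. -/
theorem stmt_9 (f : ℝ → ℝ) (hconc : ConcaveOn ℝ (Set.Ioi 0) f)
    (hneg : ∀ x : ℝ, 0 < x → x < 1 → f x < 0)
    (hone : f 1 = 0)
    (hposf : ∀ x : ℝ, 1 < x → 0 < f x)
    (hint : IntegrableOn (fun t => f (1 / t)) (Set.Ioc 0 1))
    (q : ℝ) (hq0 : 0 < q) (hq1 : q < 1) :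
    ∃ x₀ : ℝ, x₀ ∈ Set.Ioo (0:ℝ) 1 ∧
      (∑' k : ℕ, q ^ k * f (x₀ / q ^ k)) = 0 ∧
      ∀ x : ℝ, 0 < x → (∑' k : ℕ, q ^ k * f (x / q ^ k)) = 0 → x = x₀ := by
  have hf_nonneg (y : ℝ) (hy : 1 ≤ y) : 0 ≤ f y :=
    hy.eq_or_lt.elim (fun h => h ▸ hone.ge) fun h => (hposf y h).le
  have hmono : MonotoneOn f (Ioi 0) :=
    hconc.monotoneOn_of_eventually_nonneg ((eventually_ge_atTop 1).mono hf_nonneg)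
  have hsum (x : ℝ) (hx : 0 < x) : Summable fun k : ℕ => q ^ k * f (x / q ^ k) :=
    summable_pow_mul_apply_div_pow hmono hf_nonneg hint hq0 hq1 hx
  have hF := concaveOn_dilationSeries hconc hq0 hsum
  have hF_mono := hF.monotoneOn_of_eventually_nonneg
    ((eventually_ge_atTop 1).mono fun _ => dilationSeries_nonneg hf_nonneg hq0 hq1.le)
  have hF_one := dilationSeries_one_pos hf_nonneg hposf hq0 hq1 (hsum 1 one_pos)
  obtain ⟨a, ha, hFa⟩ := exists_dilationSeries_neg hmono (hneg q hq0 hq1) hq0 hq1 hsum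
  obtain ⟨x₀, hx₀, hFx₀⟩ := intermediate_value_Ioo ha.2.le
    ((hF.continuousOn isOpen_Ioi).mono fun t ht => ha.1.trans_le ht.1) ⟨hFa, hF_one⟩
  have hx₀_pos : 0 < x₀ := ha.1.trans hx₀.1
  exact ⟨x₀, ⟨hx₀_pos, hx₀.2⟩, hFx₀, fun x hx hFx =>
    hF.eq_of_apply_eq_zero hF_mono (mem_Ioi.2 one_pos) hF_one hx hx₀_pos hFx hFx₀⟩
end

section
/- Let f : (0,∞) → ℝ be concave with sign(f(x)) = sign(x−1), and suppose t ↦ f(1/t) is integrable over (0,1]. Then the equation ∫₀¹ f(1/(cx)) dx = 0 has a unique solution c, and this solution satisfies c ∈ (1, ∞). -/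
/-!
Substituting `u = c x` turns the integral into `c⁻¹ Φ(c)` with `Φ(c) = ∫₀^c f(1/u) du`.
Since `f(1/u)` is positive for `u < 1` and negative for `u > 1`, `Φ` is positive on `(0, 1]` and
strictly decreasing on `[1, ∞)`. Concavity gives `f(1/u) ≤ f(1/2) < 0` for `u ≥ 2`, so `Φ`
eventually becomes negative, and the intermediate value theorem yields the unique zero of `Φ`,
which lies in `(1, ∞)`.
-/

open MeasureTheory Set Filter intervalIntegral

section SignChange

variable {g : ℝ → ℝ}

lemma intervalIntegrable_zero_of_continuousOn_Ioi (hg : ContinuousOn g (Ioi 0))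
    (h01 : IntervalIntegrable g volume 0 1) {c : ℝ} (hc : 0 < c) :
    IntervalIntegrable g volume 0 c :=
  h01.trans <| (hg.mono fun _ hx => (lt_inf_iff.2 ⟨one_pos, hc⟩).trans_le hx.1).intervalIntegrable

lemma integral_zero_pos_of_pos_on_Ioo_zero_one (h01 : IntervalIntegrable g volume 0 1)
    (hpos : ∀ u ∈ Ioo 0 1, 0 < g u) {c : ℝ} (hc : 0 < c) (hc1 : c ≤ 1) : 0 < ∫ u in 0..c, g u :=
  intervalIntegral_pos_of_pos_on
    (h01.mono_set (uIcc_subset_uIcc_left (uIcc_of_le (zero_le_one (α := ℝ)) ▸ ⟨hc.le, hc1⟩)))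
    (fun u hu => hpos u ⟨hu.1, hu.2.trans_le hc1⟩) hc

lemma strictAntiOn_integral_zero_of_neg_on_Ioi_one (hg : ContinuousOn g (Ioi 0))
    (h01 : IntervalIntegrable g volume 0 1) (hneg : ∀ u ∈ Ioi 1, g u < 0) :
    StrictAntiOn (fun c => ∫ u in 0..c, g u) (Ici 1) := by
  intro a (ha : 1 ≤ a) b _ hab
  have hIa := intervalIntegrable_zero_of_continuousOn_Ioi hg h01 (one_pos.trans_le ha)
  have hIab : IntervalIntegrable g volume a b :=
    hIa.symm.trans (intervalIntegrable_zero_of_continuousOn_Ioi hg h01 (by linarith))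
  have hnegab : 0 < ∫ u in a..b, -g u :=
    intervalIntegral_pos_of_pos_on hIab.neg
      (fun u hu => neg_pos.2 (hneg u (ha.trans_lt hu.1))) hab
  rw [intervalIntegral.integral_neg] at hnegab
  simp only [← integral_add_adjacent_intervals hIa hIab]
  linarith

lemma exists_integral_zero_neg (hg : ContinuousOn g (Ioi 0))
    (h01 : IntervalIntegrable g volume 0 1) {β : ℝ} (hβ : β < 0)
    (hβ_top : ∀ᶠ u in atTop, g u ≤ β) : ∃ M, 0 < M ∧ ∫ u in 0..M, g u < 0 := by
  obtain ⟨R, hR⟩ := (hβ_top.and (eventually_gt_atTop 0)).exists_forall_of_atTop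
  set A := ∫ u in 0..R, g u
  set M := R + |A| / -β + 1 with hM
  have hRM : R ≤ M := by
    have : 0 ≤ |A| / -β := div_nonneg (abs_nonneg _) (by linarith)
    linarith
  have hR0 : 0 < R := (hR R le_rfl).2
  have hIR := intervalIntegrable_zero_of_continuousOn_Ioi hg h01 hR0
  have hIRM : IntervalIntegrable g volume R M :=
    hIR.symm.trans (intervalIntegrable_zero_of_continuousOn_Ioi hg h01 (hR0.trans_le hRM))
  have htail : ∫ u in R..M, g u ≤ (M - R) * β := by
    simpa using integral_mono_on hRM hIRM intervalIntegrable_const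
      fun u hu => (hR u hu.1).1
  have hMR : (M - R) * β = -|A| + β := by
    rw [hM]
    field_simp [hβ.ne]
    ring
  refine ⟨M, hR0.trans_le hRM, ?_⟩
  rw [← integral_add_adjacent_intervals hIR hIRM]
  linarith [le_abs_self A]

theorem existsUnique_integral_zero_eq_zero (hg : ContinuousOn g (Ioi 0))
    (h01 : IntervalIntegrable g volume 0 1) (hpos : ∀ u ∈ Ioo 0 1, 0 < g u)
    (hneg : ∀ u ∈ Ioi 1, g u < 0) {β : ℝ} (hβ : β < 0) (hβ_top : ∀ᶠ u in atTop, g u ≤ β) :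
    ∃ c, 1 < c ∧ ∫ u in 0..c, g u = 0 ∧ ∀ c', 0 < c' → ∫ u in 0..c', g u = 0 → c' = c := by
  have hanti := strictAntiOn_integral_zero_of_neg_on_Ioi_one hg h01 hneg
  have hΦ1 := integral_zero_pos_of_pos_on_Ioo_zero_one h01 hpos one_pos le_rfl
  obtain ⟨M, hM0, hM⟩ := exists_integral_zero_neg hg h01 hβ hβ_top
  have hM1 : 1 < M := by
    by_contra! hM1
    exact hM.not_gt (integral_zero_pos_of_pos_on_Ioo_zero_one h01 hpos hM0 hM1)
  have hcont : ContinuousOn (fun c => ∫ u in 0..c, g u) (Icc 1 M) := by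
    refine (continuousOn_primitive_interval'
      (intervalIntegrable_zero_of_continuousOn_Ioi hg h01 hM0) left_mem_uIcc).mono ?_
    rw [uIcc_of_le hM0.le]
    exact Icc_subset_Icc zero_le_one le_rfl
  obtain ⟨c, hc, hΦc⟩ := intermediate_value_Ioo' hM1.le hcont ⟨hM, hΦ1⟩
  refine ⟨c, hc.1, hΦc, fun c' hc' hΦc' => ?_⟩
  have hc'1 : 1 < c' := by
    by_contra! hc'1
    exact hΦc'.not_gt (integral_zero_pos_of_pos_on_Ioo_zero_one h01 hpos hc' hc'1)
  exact hanti.injOn hc'1.le hc.1.le (hΦc'.trans hΦc.symm)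

end SignChange

theorem ConcaveOn.left_le_of_le_right_of_lt_of_lt {s : Set ℝ} {f : ℝ → ℝ} (hf : ConcaveOn ℝ s f)
    {x y z : ℝ} (hx : x ∈ s) (hz : z ∈ s) (hxy : x < y) (hyz : y < z) (hfyz : f y ≤ f z) :
    f x ≤ f y :=
  hf.left_le_of_le_right hx hz (openSegment_eq_Ioo (hxy.trans hyz) ▸ ⟨hxy, hyz⟩) hfyz

lemma setIntegral_Ioc_zero_one_comp_mul_left (g : ℝ → ℝ) {c : ℝ} (hc : 0 < c) :
    ∫ x in Ioc 0 1, g (c * x) = c⁻¹ * ∫ u in 0..c, g u := by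
  rw [← integral_of_le zero_le_one, integral_comp_mul_left g hc.ne', mul_zero, mul_one,
    smul_eq_mul]

/-- The equation `∫₀¹ f(1/(cx)) dx = 0` has a unique positive solution `c`,
and it lies in `(1,∞)`. -/
theorem stmt_10 (f : ℝ → ℝ) (hconc : ConcaveOn ℝ (Set.Ioi 0) f)
    (hneg : ∀ x : ℝ, 0 < x → x < 1 → f x < 0)
    (hone : f 1 = 0)
    (hposf : ∀ x : ℝ, 1 < x → 0 < f x)
    (hint : IntegrableOn (fun t => f (1 / t)) (Set.Ioc 0 1)) :
    ∃ c : ℝ, 1 < c ∧ (∫ x in Set.Ioc (0:ℝ) 1, f (1 / (c * x))) = 0 ∧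
      ∀ c' : ℝ, 0 < c' → (∫ x in Set.Ioc (0:ℝ) 1, f (1 / (c' * x))) = 0 → c' = c := by
  have hsubst (c : ℝ) (hc : 0 < c) :
      ∫ x in Ioc 0 1, f (1 / (c * x)) = c⁻¹ * ∫ u in 0..c, f (1 / u) :=
    setIntegral_Ioc_zero_one_comp_mul_left (fun u => f (1 / u)) hc
  have hcont : ContinuousOn (fun u : ℝ => f (1 / u)) (Ioi 0) :=
    (hconc.continuousOn isOpen_Ioi).comp (continuousOn_const.div continuousOn_id
      fun _ hu => (mem_Ioi.1 hu).ne') fun _ hu => mem_Ioi.2 (one_div_pos.2 hu)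
  have hhalf : f (1 / 2) < 0 := hneg _ (by norm_num) (by norm_num)
  have htop : ∀ᶠ u : ℝ in atTop, f (1 / u) ≤ f (1 / 2) := by
    filter_upwards [eventually_gt_atTop 2] with u hu
    exact hconc.left_le_of_le_right_of_lt_of_lt (one_div_pos.2 (two_pos.trans hu))
      (mem_Ioi.2 one_pos) (one_div_lt_one_div_of_lt two_pos hu) (by norm_num) (hone ▸ hhalf.le)
  obtain ⟨c, hc1, hc0, huniq⟩ := existsUnique_integral_zero_eq_zero hcont
    ((intervalIntegrable_iff_integrableOn_Ioc_of_le zero_le_one).2 hint)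
    (fun u hu => hposf _ (one_lt_one_div hu.1 hu.2))
    (fun u hu => hneg _ (one_div_pos.2 (one_pos.trans hu)) ((div_lt_one (one_pos.trans hu)).2 hu))
    hhalf htop
  refine ⟨c, hc1, by rw [hsubst c (one_pos.trans hc1), hc0, mul_zero], fun c' hc' h => ?_⟩
  rw [hsubst c' hc'] at h
  exact huniq c' hc' ((mul_eq_zero.1 h).resolve_left (inv_ne_zero hc'.ne'))
end

section
/- For p ∈ (0,1), any positive weight sequence (λ_n), and any positive sequence (x_n), the weighted power-mean Hardy (Copson–Elliott) inequality holds: ∑_{n=1}^∞ λ_n · ((λ_1 x_1^p + ... + λ_n x_n^p)/(λ_1 + ... + λ_n))^{1/p} ≤ (1−p)^{−1/p} · ∑_{n=1}^∞ λ_n x_n. -/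
/-!
Let `M n` be the power mean of the first `n + 1` terms and `W n` the corresponding weight sum.
Since `W n * M n ^ p - W (n - 1) * M (n - 1) ^ p = w n * x n ^ p`, weighted AM–GM makes
`(1 - p) * ∑ w n * M n ≤ ∑ w n * x n ^ p * M n ^ (1 - p)` telescope, and Hölder's inequality with
exponents `1 / p` and `1 / (1 - p)` bounds the right side by
`(∑ w n * x n) ^ p * (∑ w n * M n) ^ (1 - p)`. Dividing out gives the inequality for partial sums,
which passes to the series in `[0, ∞]`.
-/

open Finset Real

lemma Real.rpow_mul_rpow_one_sub {a : ℝ} (ha : 0 ≤ a) (p : ℝ) : a ^ p * a ^ (1 - p) = a := by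
  rw [← rpow_add' ha (by norm_num), add_sub_cancel, rpow_one]

lemma Real.sum_rpow_mul_rpow_one_sub_le {ι : Type*} (s : Finset ι) {f g : ι → ℝ} {p : ℝ}
    (hp0 : 0 < p) (hp1 : p < 1) (hf : ∀ i ∈ s, 0 ≤ f i) (hg : ∀ i ∈ s, 0 ≤ g i) :
    ∑ i ∈ s, f i ^ p * g i ^ (1 - p) ≤ (∑ i ∈ s, f i) ^ p * (∑ i ∈ s, g i) ^ (1 - p) := by
  have hpow {a : ℝ} (ha : 0 ≤ a) {r : ℝ} (hr : r ≠ 0) : (a ^ r) ^ r⁻¹ = a := by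
    rw [← rpow_mul ha, mul_inv_cancel₀ hr, rpow_one]
  have holder := inner_le_Lp_mul_Lq_of_nonneg s (HolderConjugate.inv_one_sub_inv hp0 hp1)
    (fun i hi => rpow_nonneg (hf i hi) p) (fun i hi => rpow_nonneg (hg i hi) (1 - p))
  rwa [sum_congr rfl fun i hi => hpow (hf i hi) hp0.ne',
    sum_congr rfl fun i hi => hpow (hg i hi) (sub_ne_zero.2 hp1.ne'),
    one_div, one_div, inv_inv, inv_inv] at holder

/-- Here `b` is the power mean after appending `y = x ^ p` with weight `v` to data of total
weight `W` and power mean `a`; the inequality reduces to weighted AM–GM. -/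
lemma copson_step {p W v a b y : ℝ} (hp0 : 0 ≤ p) (hp1 : p ≤ 1) (hW : 0 ≤ W) (ha : 0 ≤ a)
    (hb : 0 ≤ b) (h : W * a ^ p + v * y = (W + v) * b ^ p) :
    (1 - p) * (v * b) + p * ((W + v) * b - W * a) ≤ v * y * b ^ (1 - p) := by
  have amgm : a ^ p * b ^ (1 - p) ≤ p * a + (1 - p) * b :=
    geom_mean_le_arith_mean2_weighted hp0 (by linarith) ha hb (by ring)
  have hvy : v * y * b ^ (1 - p) = (W + v) * b - W * (a ^ p * b ^ (1 - p)) := by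
    rw [eq_sub_of_add_eq' h, sub_mul, mul_assoc, rpow_mul_rpow_one_sub hb, mul_assoc]
  rw [hvy]
  nlinarith [mul_le_mul_of_nonneg_left amgm hW]

lemma le_one_sub_rpow_neg_inv_mul_of_le {p T X : ℝ} (hp0 : 0 < p) (hp1 : p < 1) (hT : 0 ≤ T)
    (hX : 0 ≤ X) (h : (1 - p) * T ≤ X ^ p * T ^ (1 - p)) :
    T ≤ (1 - p) ^ (-1 / p) * X := by
  have hq : 0 < 1 - p := by linarith
  rcases hT.eq_or_lt with rfl | hT
  · positivity
  have hTp : (1 - p) * T ^ p ≤ X ^ p := by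
    refine le_of_mul_le_mul_right ?_ (rpow_pos_of_pos hT (1 - p))
    rwa [mul_assoc, rpow_mul_rpow_one_sub hT.le]
  have hC : ((1 - p) ^ (-1 / p)) ^ p = (1 - p)⁻¹ := by
    rw [← rpow_mul hq.le, div_mul_cancel₀ _ hp0.ne', rpow_neg_one]
  rw [← rpow_le_rpow_iff hT.le (by positivity) hp0, mul_rpow (by positivity) hX, hC,
    ← div_eq_inv_mul, le_div_iff₀ hq, mul_comm]
  exact hTp

lemma ENNReal.tsum_ofReal_le_ofReal_mul_tsum_ofReal {f g : ℕ → ℝ} {C : ℝ} (hf : ∀ n, 0 ≤ f n)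
    (hg : ∀ n, 0 ≤ g n) (hC : 0 ≤ C) (h : ∀ N, ∑ n ∈ range N, f n ≤ C * ∑ n ∈ range N, g n) :
    ∑' n, ENNReal.ofReal (f n) ≤ ENNReal.ofReal C * ∑' n, ENNReal.ofReal (g n) := by
  rw [ENNReal.tsum_eq_iSup_nat]
  refine iSup_le fun N => ?_
  calc ∑ n ∈ range N, ENNReal.ofReal (f n)
      = ENNReal.ofReal (∑ n ∈ range N, f n) := (ofReal_sum_of_nonneg fun n _ => hf n).symm
    _ ≤ ENNReal.ofReal (C * ∑ n ∈ range N, g n) := ofReal_le_ofReal (h N)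
    _ = ENNReal.ofReal C * ∑ n ∈ range N, ENNReal.ofReal (g n) := by
      rw [ofReal_mul hC, ofReal_sum_of_nonneg fun n _ => hg n]
    _ ≤ ENNReal.ofReal C * ∑' n, ENNReal.ofReal (g n) := by
      gcongr
      exact ENNReal.sum_le_tsum _

noncomputable def partialPowerMean (p : ℝ) (w x : ℕ → ℝ) (n : ℕ) : ℝ :=
  ((∑ k ∈ range (n + 1), w k * x k ^ p) / ∑ k ∈ range (n + 1), w k) ^ (1 / p)

section partialPowerMean

variable {p : ℝ} {w x : ℕ → ℝ}

lemma partialPowerMean_nonneg (hw : ∀ n, 0 ≤ w n) (hx : ∀ n, 0 ≤ x n) (n : ℕ) :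
    0 ≤ partialPowerMean p w x n :=
  rpow_nonneg (div_nonneg (sum_nonneg fun k _ => mul_nonneg (hw k) (rpow_nonneg (hx k) p))
    (sum_nonneg fun k _ => hw k)) _

lemma sum_mul_partialPowerMean_rpow (hp : p ≠ 0) (hw : ∀ n, 0 ≤ w n) (hx : ∀ n, 0 ≤ x n)
    (n : ℕ) :
    (∑ k ∈ range (n + 1), w k) * partialPowerMean p w x n ^ p =
      ∑ k ∈ range (n + 1), w k * x k ^ p := by
  have hS : 0 ≤ ∑ k ∈ range (n + 1), w k * x k ^ p :=
    sum_nonneg fun k _ => mul_nonneg (hw k) (rpow_nonneg (hx k) p)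
  rcases (sum_nonneg fun k _ => hw k : 0 ≤ ∑ k ∈ range (n + 1), w k).eq_or_lt with hW | hW
  · have hw0 : ∀ k ∈ range (n + 1), w k = 0 :=
      (sum_eq_zero_iff_of_nonneg fun k _ => hw k).1 hW.symm
    rw [← hW, zero_mul, sum_eq_zero fun k hk => by rw [hw0 k hk, zero_mul]]
  · rw [partialPowerMean, one_div, rpow_inv_rpow (div_nonneg hS hW.le) hp,
      mul_div_cancel₀ _ hW.ne']

lemma copson_telescoping (hp0 : 0 < p) (hp1 : p ≤ 1) (hw : ∀ n, 0 ≤ w n) (hx : ∀ n, 0 ≤ x n)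
    (N : ℕ) :
    (1 - p) * ∑ n ∈ range (N + 1), w n * partialPowerMean p w x n +
        p * ((∑ k ∈ range (N + 1), w k) * partialPowerMean p w x N) ≤
      ∑ n ∈ range (N + 1), w n * x n ^ p * partialPowerMean p w x n ^ (1 - p) := by
  have hM := partialPowerMean_nonneg (p := p) hw hx
  have hWM := sum_mul_partialPowerMean_rpow hp0.ne' hw hx
  induction N with
  | zero =>
    have := copson_step (W := 0) (a := 0) (v := w 0) (y := x 0 ^ p) hp0.le hp1 le_rfl le_rfl
      (hM 0) (by simpa using (hWM 0).symm)
    simpa using this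
  | succ N ih =>
    have step := copson_step (v := w (N + 1)) (y := x (N + 1) ^ p) hp0.le hp1
      (sum_nonneg fun k _ => hw k) (hM N) (hM (N + 1))
      (by rw [hWM, ← sum_range_succ, ← sum_range_succ, hWM])
    simp only [sum_range_succ _ (N + 1)]
    linarith

lemma sum_mul_partialPowerMean_le (hp0 : 0 < p) (hp1 : p < 1) (hw : ∀ n, 0 ≤ w n)
    (hx : ∀ n, 0 ≤ x n) (N : ℕ) :
    ∑ n ∈ range N, w n * partialPowerMean p w x n ≤
      (1 - p) ^ (-1 / p) * ∑ n ∈ range N, w n * x n := by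
  cases N with
  | zero => simp
  | succ N =>
    have hM := partialPowerMean_nonneg (p := p) hw hx
    have hWM : 0 ≤ p * ((∑ k ∈ range (N + 1), w k) * partialPowerMean p w x N) :=
      mul_nonneg hp0.le (mul_nonneg (sum_nonneg fun k _ => hw k) (hM N))
    refine le_one_sub_rpow_neg_inv_mul_of_le hp0 hp1
      (sum_nonneg fun n _ => mul_nonneg (hw n) (hM n))
      (sum_nonneg fun n _ => mul_nonneg (hw n) (hx n)) ?_
    calc (1 - p) * ∑ n ∈ range (N + 1), w n * partialPowerMean p w x n
        ≤ ∑ n ∈ range (N + 1), w n * x n ^ p * partialPowerMean p w x n ^ (1 - p) := by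
          linarith [copson_telescoping hp0 hp1.le hw hx N]
      _ = ∑ n ∈ range (N + 1),
            (w n * x n) ^ p * (w n * partialPowerMean p w x n) ^ (1 - p) := by
          refine sum_congr rfl fun n _ => ?_
          rw [mul_rpow (hw n) (hx n), mul_rpow (hw n) (hM n), mul_mul_mul_comm,
            rpow_mul_rpow_one_sub (hw n), mul_assoc]
      _ ≤ _ := sum_rpow_mul_rpow_one_sub_le _ hp0 hp1
          (fun n _ => mul_nonneg (hw n) (hx n)) (fun n _ => mul_nonneg (hw n) (hM n))

end partialPowerMean

/-- The weighted Copson–Elliott inequality for power means, `p ∈ (0,1)`: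
`∑ λ_n P_p((x_1,…,x_n),(λ_1,…,λ_n)) ≤ (1-p)^{-1/p} ∑ λ_n x_n` in `[0,∞]`. -/
theorem stmt_12 (p : ℝ) (hp0 : 0 < p) (hp1 : p < 1)
    (w x : ℕ → ℝ) (hw : ∀ n, 0 < w n) (hx : ∀ n, 0 < x n) :
    (∑' n : ℕ, ENNReal.ofReal (w n *
        Real.rpow ((∑ k ∈ Finset.range (n + 1), w k * Real.rpow (x k) p) /
          (∑ k ∈ Finset.range (n + 1), w k)) (1 / p))) ≤
      ENNReal.ofReal (Real.rpow (1 - p) (-1 / p)) *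
        ∑' n : ℕ, ENNReal.ofReal (w n * x n) := by
  have hw' : ∀ n, 0 ≤ w n := fun n => (hw n).le
  have hx' : ∀ n, 0 ≤ x n := fun n => (hx n).le
  exact ENNReal.tsum_ofReal_le_ofReal_mul_tsum_ofReal
    (fun n => mul_nonneg (hw' n) (partialPowerMean_nonneg hw' hx' n))
    (fun n => mul_nonneg (hw' n) (hx' n)) (rpow_nonneg (by linarith) _)
    (sum_mul_partialPowerMean_le hp0 hp1 hw' hx')
end

section
/- Let p, q be reals with p ≠ q, min(p,q) ≤ 0 ≤ max(p,q) < 1. Then c := ((1−q)/(1−p))^{1/(p−q)} is the unique solution of ∫₀¹ f(1/(cx)) dx = 0 where f(x) = (x^p − x^q)/(p−q); i.e., c^{−p}/(1−p) = c^{−q}/(1−q). -/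
/-!
Since `(1/(cx))^r = c^{-r} x^{-r}` and `∫₀¹ x^{-r} dx = 1/(1-r)` for `r < 1`, the integral equals
`(c^{-p}/(1-p) - c^{-q}/(1-q))/(p-q)`. It vanishes iff `c^{p-q} = (1-q)/(1-p)`, and as `p ≠ q`
this has the single positive solution `c = ((1-q)/(1-p))^{1/(p-q)}`.
-/

open MeasureTheory Set

namespace Real

variable {r c : ℝ}

lemma one_div_mul_rpow (hc : 0 < c) {x : ℝ} (hx : 0 < x) :
    (1 / (c * x)) ^ r = c ^ (-r) * x ^ (-r) := by
  rw [one_div, inv_rpow (mul_pos hc hx).le, ← rpow_neg (mul_pos hc hx).le, mul_rpow hc.le hx.le]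

lemma integrableOn_Ioc_one_div_mul_rpow (hr : r < 1) (hc : 0 < c) :
    IntegrableOn (fun x : ℝ => (1 / (c * x)) ^ r) (Ioc 0 1) := by
  have hpow : IntegrableOn (fun x : ℝ => x ^ (-r)) (Ioc 0 1) :=
    (intervalIntegrable_iff_integrableOn_Ioc_of_le zero_le_one).mp
      (intervalIntegral.intervalIntegrable_rpow' (by linarith))
  exact IntegrableOn.congr_fun (hpow.const_mul (c ^ (-r)))
    (fun x hx => (one_div_mul_rpow hc hx.1).symm) measurableSet_Ioc

lemma integral_Ioc_one_div_mul_rpow (hr : r < 1) (hc : 0 < c) :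
    ∫ x in Ioc 0 1, (1 / (c * x)) ^ r = c ^ (-r) / (1 - r) := by
  have hpow : ∫ x in Ioc 0 1, x ^ (-r) = 1 / (1 - r) := by
    rw [← intervalIntegral.integral_of_le zero_le_one, integral_rpow (Or.inl (by linarith)),
      one_rpow, zero_rpow (by linarith)]
    ring_nf
  rw [setIntegral_congr_fun measurableSet_Ioc (fun x hx => one_div_mul_rpow hc hx.1),
    integral_const_mul, hpow, mul_one_div]

end Real

open Real

section

variable {p q c : ℝ}

lemma integral_Ioc_one_div_mul_rpow_sub_rpow_div (hp : p < 1) (hq : q < 1) (hc : 0 < c) :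
    ∫ x in Ioc 0 1, ((1 / (c * x)) ^ p - (1 / (c * x)) ^ q) / (p - q) =
      (c ^ (-p) / (1 - p) - c ^ (-q) / (1 - q)) / (p - q) := by
  rw [integral_div, integral_sub (integrableOn_Ioc_one_div_mul_rpow hp hc)
    (integrableOn_Ioc_one_div_mul_rpow hq hc), integral_Ioc_one_div_mul_rpow hp hc,
    integral_Ioc_one_div_mul_rpow hq hc]

lemma rpow_neg_div_eq_iff_rpow_sub_eq (hp : p < 1) (hq : q < 1) (hc : 0 < c) :
    c ^ (-p) / (1 - p) = c ^ (-q) / (1 - q) ↔ c ^ (p - q) = (1 - q) / (1 - p) := by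
  have h1p : 1 - p ≠ 0 := by linarith
  have h1q : 1 - q ≠ 0 := by linarith
  rw [show p - q = -q - -p by ring, rpow_sub hc, div_eq_div_iff h1p h1q,
    div_eq_div_iff (rpow_pos_of_pos hc _).ne' h1p]
  constructor <;> intro h <;> linarith

lemma rpow_neg_div_eq_iff (hpq : p ≠ q) (hp : p < 1) (hq : q < 1) (hc : 0 < c) :
    c ^ (-p) / (1 - p) = c ^ (-q) / (1 - q) ↔ c = ((1 - q) / (1 - p)) ^ (1 / (p - q)) := by
  rw [rpow_neg_div_eq_iff_rpow_sub_eq hp hq hc, one_div,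
    eq_rpow_inv hc.le (div_pos (by linarith) (by linarith)).le (sub_ne_zero.mpr hpq)]

end

theorem stmt_16_general (p q : ℝ) (hpq : p ≠ q)
    (hmax1 : max p q < 1)
    (f : ℝ → ℝ) (hf : ∀ x : ℝ, f x = (Real.rpow x p - Real.rpow x q) / (p - q))
    (c : ℝ) (hc : c = Real.rpow ((1 - q) / (1 - p)) (1 / (p - q))) :
    (∫ x in Set.Ioc (0:ℝ) 1, f (1 / (c * x))) = 0 ∧
    (∀ c' : ℝ, 0 < c' → (∫ x in Set.Ioc (0:ℝ) 1, f (1 / (c' * x))) = 0 → c' = c) ∧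
    Real.rpow c (-p) / (1 - p) = Real.rpow c (-q) / (1 - q) := by
  simp only [rpow_eq_pow] at hf hc ⊢
  have hp : p < 1 := (le_max_left p q).trans_lt hmax1
  have hq : q < 1 := (le_max_right p q).trans_lt hmax1
  have hzero_iff : ∀ c' : ℝ, 0 < c' →
      ((∫ x in Ioc 0 1, f (1 / (c' * x))) = 0 ↔ c' = c) := by
    intro c' hc'
    simp only [hf]
    rw [integral_Ioc_one_div_mul_rpow_sub_rpow_div hp hq hc', div_eq_zero_iff,
      or_iff_left (sub_ne_zero.mpr hpq), sub_eq_zero, rpow_neg_div_eq_iff hpq hp hq hc', hc]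
  have hc_pos : 0 < c := hc ▸ rpow_pos_of_pos (div_pos (by linarith) (by linarith)) _
  exact ⟨(hzero_iff c hc_pos).mpr rfl, fun c' hc' => (hzero_iff c' hc').mp,
    (rpow_neg_div_eq_iff hpq hp hq hc_pos).mpr hc⟩

/-- For `p ≠ q` with `min(p,q) ≤ 0 ≤ max(p,q) < 1`,
`c := ((1-q)/(1-p))^{1/(p-q)}` is the unique positive solution of
`∫₀¹ f(1/(cx)) dx = 0` with `f(x) = (x^p - x^q)/(p-q)`, i.e.
`c^{-p}/(1-p) = c^{-q}/(1-q)`. -/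
theorem stmt_16 (p q : ℝ) (hpq : p ≠ q)
    (hmin : min p q ≤ 0) (hmax0 : 0 ≤ max p q) (hmax1 : max p q < 1)
    (f : ℝ → ℝ) (hf : ∀ x : ℝ, f x = (Real.rpow x p - Real.rpow x q) / (p - q))
    (c : ℝ) (hc : c = Real.rpow ((1 - q) / (1 - p)) (1 / (p - q))) :
    (∫ x in Set.Ioc (0:ℝ) 1, f (1 / (c * x))) = 0 ∧
    (∀ c' : ℝ, 0 < c' → (∫ x in Set.Ioc (0:ℝ) 1, f (1 / (c' * x))) = 0 → c' = c) ∧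
    Real.rpow c (-p) / (1 - p) = Real.rpow c (-q) / (1 - q) :=
  stmt_16_general p q hpq hmax1 f hf c hc
end

section
/- For any η ∈ (0,1), any q ∈ (0,1) with q = 1−η, and any continuous nonincreasing integrable φ : (0,1] → ℝ, one has lim_{η→0⁺} ∑_{k=0}^∞ η(1−η)^k φ((1−η)^k) = ∫₀¹ φ(x) dx; that is, the map η ↦ ∑_{k=0}^∞ η(1−η)^k φ((1−η)^k) on (0,1) extends continuously to η = 0 with value ∫₀¹ φ. -/
/-!
Put `q = 1 - η` and cut `(0,1]` into the geometric pieces `(q^(k+1), q^k]`. Since `φ` is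
nonincreasing, the `k`-th term `(1-q) q^k φ(q^k) = (q^k - q^(k+1)) φ(q^k)` is at most the
integral of `φ` over the `k`-th piece, and `q` times that integral is at most the next term.
Summing, the series lies between `(1-q) φ(1) + q ∫₀¹ φ` and `∫₀¹ φ`, and both bounds tend to
`∫₀¹ φ` as `q → 1`.
-/

open Filter MeasureTheory Set

theorem AntitoneOn.mul_le_intervalIntegral {f : ℝ → ℝ} {a b : ℝ} (hab : a ≤ b)
    (hf : AntitoneOn f (Icc a b)) : (b - a) * f b ≤ ∫ x in a..b, f x := by
  have hf' : AntitoneOn f (uIcc a b) := by rwa [uIcc_of_le hab]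
  have h := intervalIntegral.integral_mono_on (μ := volume) hab intervalIntegrable_const
    hf'.intervalIntegrable
    fun x hx => hf hx (right_mem_Icc.2 hab) hx.2
  simpa [mul_comm] using h

theorem AntitoneOn.intervalIntegral_le_mul {f : ℝ → ℝ} {a b : ℝ} (hab : a ≤ b)
    (hf : AntitoneOn f (Icc a b)) : ∫ x in a..b, f x ≤ (b - a) * f a := by
  have hf' : AntitoneOn f (uIcc a b) := by rwa [uIcc_of_le hab]
  have h := intervalIntegral.integral_mono_on (μ := volume) hab hf'.intervalIntegrable
    intervalIntegrable_const
    fun x hx => hf (left_mem_Icc.2 hab) hx hx.1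
  simpa [mul_comm] using h

theorem iUnion_Ioc_pow_succ_pow {q : ℝ} (hq₀ : 0 < q) (hq₁ : q < 1) :
    ⋃ k : ℕ, Ioc (q ^ (k + 1)) (q ^ k) = Ioc 0 1 := by
  ext x
  simp only [mem_iUnion, mem_Ioc]
  constructor
  · rintro ⟨k, hk₁, hk₂⟩
    exact ⟨(pow_pos hq₀ _).trans hk₁, hk₂.trans (pow_le_one₀ hq₀.le hq₁.le)⟩
  · rintro ⟨hx₀, hx₁⟩
    exact exists_nat_pow_near_of_lt_one hx₀ hx₁ hq₀ hq₁

section GeometricPartition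

variable {φ : ℝ → ℝ} {q : ℝ}

theorem hasSum_intervalIntegral_pow_succ_pow (hq₀ : 0 < q) (hq₁ : q < 1)
    (hint : IntegrableOn φ (Ioc 0 1)) :
    HasSum (fun k : ℕ => ∫ x in q ^ (k + 1)..q ^ k, φ x) (∫ x in Ioc (0 : ℝ) 1, φ x) := by
  have hdisj : Pairwise (Function.onFun Disjoint fun k : ℕ => Ioc (q ^ (k + 1)) (q ^ k)) := by
    simpa using (pow_right_anti₀ hq₀.le hq₁.le).pairwise_disjoint_on_Ioc_succ
  have h := hasSum_integral_iUnion (fun _ => measurableSet_Ioc) hdisj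
    (by rwa [iUnion_Ioc_pow_succ_pow hq₀ hq₁])
  rw [iUnion_Ioc_pow_succ_pow hq₀ hq₁] at h
  refine h.congr_fun fun k => ?_
  exact intervalIntegral.integral_of_le (pow_le_pow_of_le_one hq₀.le hq₁.le (Nat.le_succ k))

theorem AntitoneOn.mono_Icc_pow_succ_pow (hmono : AntitoneOn φ (Ioc 0 1)) (hq₀ : 0 < q)
    (hq₁ : q < 1) (k : ℕ) : AntitoneOn φ (Icc (q ^ (k + 1)) (q ^ k)) :=
  hmono.mono (Icc_subset_Ioc (pow_pos hq₀ _) (pow_le_one₀ hq₀.le hq₁.le))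

theorem AntitoneOn.geom_term_le_intervalIntegral (hmono : AntitoneOn φ (Ioc 0 1))
    (hq₀ : 0 < q) (hq₁ : q < 1) (k : ℕ) :
    (1 - q) * q ^ k * φ (q ^ k) ≤ ∫ x in q ^ (k + 1)..q ^ k, φ x := by
  have h := (hmono.mono_Icc_pow_succ_pow hq₀ hq₁ k).mul_le_intervalIntegral
    (pow_le_pow_of_le_one hq₀.le hq₁.le (Nat.le_succ k))
  calc (1 - q) * q ^ k * φ (q ^ k) = (q ^ k - q ^ (k + 1)) * φ (q ^ k) := by ring
    _ ≤ _ := h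

theorem AntitoneOn.mul_intervalIntegral_le_geom_term (hmono : AntitoneOn φ (Ioc 0 1))
    (hq₀ : 0 < q) (hq₁ : q < 1) (k : ℕ) :
    q * ∫ x in q ^ (k + 1)..q ^ k, φ x ≤ (1 - q) * q ^ (k + 1) * φ (q ^ (k + 1)) := by
  have h := (hmono.mono_Icc_pow_succ_pow hq₀ hq₁ k).intervalIntegral_le_mul
    (pow_le_pow_of_le_one hq₀.le hq₁.le (Nat.le_succ k))
  calc q * ∫ x in q ^ (k + 1)..q ^ k, φ x
      ≤ q * ((q ^ k - q ^ (k + 1)) * φ (q ^ (k + 1))) := by gcongr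
    _ = (1 - q) * q ^ (k + 1) * φ (q ^ (k + 1)) := by ring

theorem AntitoneOn.geom_sum_bounds (hmono : AntitoneOn φ (Ioc 0 1))
    (hint : IntegrableOn φ (Ioc 0 1)) (hq₀ : 0 < q) (hq₁ : q < 1) :
    (1 - q) * φ 1 + q * ∫ x in Ioc (0 : ℝ) 1, φ x ≤ ∑' k : ℕ, (1 - q) * q ^ k * φ (q ^ k) ∧
      ∑' k : ℕ, (1 - q) * q ^ k * φ (q ^ k) ≤ ∫ x in Ioc (0 : ℝ) 1, φ x := by
  set a : ℕ → ℝ := fun k => (1 - q) * q ^ k * φ (q ^ k)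
  set b : ℕ → ℝ := fun k => ∫ x in q ^ (k + 1)..q ^ k, φ x
  have hb : HasSum b _ := hasSum_intervalIntegral_pow_succ_pow hq₀ hq₁ hint
  have hab : ∀ k, a k ≤ b k := hmono.geom_term_le_intervalIntegral hq₀ hq₁
  have hba : ∀ k, q * b k ≤ a (k + 1) := hmono.mul_intervalIntegral_le_geom_term hq₀ hq₁
  -- `a (k + 1)` is squeezed between the summable sequences `q * b k` and `b (k + 1)`.
  have ha_succ : Summable fun k => a (k + 1) := by
    have hgap : Summable fun k => a (k + 1) - q * b k :=
      (((summable_nat_add_iff 1).2 hb.summable).sub (hb.summable.mul_left q)).of_nonneg_of_le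
        (fun k => sub_nonneg.2 (hba k)) fun k => by linarith [hab (k + 1)]
    simpa using hgap.add (hb.summable.mul_left q)
  have ha : Summable a := (summable_nat_add_iff 1).1 ha_succ
  constructor
  · have hlow : q * ∫ x in Ioc (0 : ℝ) 1, φ x ≤ ∑' k, a (k + 1) :=
      hasSum_le hba (hb.mul_left q) ha_succ.hasSum
    rw [ha.tsum_eq_zero_add]
    simpa [a] using hlow
  · exact hasSum_le hab ha.hasSum hb

end GeometricPartition

theorem stmt_17_general (φ : ℝ → ℝ)
    (hmono : AntitoneOn φ (Set.Ioc 0 1))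
    (hint : IntegrableOn φ (Set.Ioc 0 1)) :
    Tendsto (fun η : ℝ => ∑' k : ℕ, η * (1 - η) ^ k * φ ((1 - η) ^ k))
      (nhdsWithin 0 (Set.Ioo 0 1))
      (nhds (∫ x in Set.Ioc (0:ℝ) 1, φ x)) := by
  set J := ∫ x in Set.Ioc (0:ℝ) 1, φ x
  have hbounds : ∀ η ∈ Ioo (0 : ℝ) 1,
      η * φ 1 + (1 - η) * J ≤ ∑' k : ℕ, η * (1 - η) ^ k * φ ((1 - η) ^ k) ∧
        ∑' k : ℕ, η * (1 - η) ^ k * φ ((1 - η) ^ k) ≤ J := fun η hη => by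
    simpa only [sub_sub_cancel] using
      hmono.geom_sum_bounds hint (q := 1 - η) (by linarith [hη.2]) (by linarith [hη.1])
  have hlower :
      Tendsto (fun η : ℝ => η * φ 1 + (1 - η) * J) (nhdsWithin 0 (Ioo 0 1)) (nhds J) := by
    have h : Continuous fun η : ℝ => η * φ 1 + (1 - η) * J := by fun_prop
    simpa using (h.tendsto 0).mono_left nhdsWithin_le_nhds
  refine tendsto_of_tendsto_of_tendsto_of_le_of_le' hlower tendsto_const_nhds ?_ ?_
  · filter_upwards [self_mem_nhdsWithin] with η hη using (hbounds η hη).1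
  · filter_upwards [self_mem_nhdsWithin] with η hη using (hbounds η hη).2

/-- The map `η ↦ ∑_{k=0}^∞ η(1-η)^k φ((1-η)^k)` on `(0,1)` tends to `∫₀¹ φ`
as `η → 0⁺`, for `φ` continuous, nonincreasing and integrable on `(0,1]`. -/
theorem stmt_17 (φ : ℝ → ℝ) (hcont : ContinuousOn φ (Set.Ioc 0 1))
    (hmono : AntitoneOn φ (Set.Ioc 0 1))
    (hint : IntegrableOn φ (Set.Ioc 0 1)) :
    Tendsto (fun η : ℝ => ∑' k : ℕ, η * (1 - η) ^ k * φ ((1 - η) ^ k))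
      (nhdsWithin 0 (Set.Ioo 0 1))
      (nhds (∫ x in Set.Ioc (0:ℝ) 1, φ x)) :=
  stmt_17_general φ hmono hint
end

section
/- Let I = (0,a) for some a ∈ (0,∞], and let M be a weighted mean on I that is Jensen concave (i.e. M((x+y)/2, λ) ≥ (M(x,λ)+M(y,λ))/2 in each finite dimension). Define M_#(x,λ) := liminf_{t→0⁺} M(tx,λ)/t for positive vectors x. Then for every weight sequence λ and every positive sequence (x_n), if ∑_n λ_n M((x_1,...,x_n),(λ_1,...,λ_n)) ≤ C ∑_n λ_n x_n holds for all admissible sequences, then also ∑_n λ_n M_#((x_1,...,x_n),(λ_1,...,λ_n)) ≤ C ∑_n λ_n x_n holds for all positive sequences; consequently the λ-Hardy constant of M_# is at most that of M, with equality when M is Jensen concave (since then M ≤ M_#). -/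
/-!
Testing the Hardy inequality for `M` on `t • x`, cut off at a small level so that it stays in
`I`, and dividing by `t`, bounds the first `N` terms of the Hardy sum of `x` with the
quotients `M(t x) / t`; letting `t → 0⁺` turns them into `M_#(x)` with the same constant.
Conversely, for Jensen-concave `M` the map `s ↦ M(s x)` is midpoint concave and nonnegative
on `(0, 1]`, which along dyadic combinations gives `s M(x) ≤ M(s x)`, hence `M ≤ M_#` on `I`.
-/

open Filter Set Topology
open scoped ENNReal

def IsWeightedMean (I : Set ℝ) (M : ∀ n : ℕ, (Fin (n + 1) → ℝ) → (Fin (n + 1) → ℝ) → ℝ) :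
    Prop :=
  ∀ (n : ℕ) (x v : Fin (n + 1) → ℝ), (∀ i, x i ∈ I) → (∀ i, 0 ≤ v i) → 0 < ∑ i, v i →
    (⨅ i, x i) ≤ M n x v ∧ M n x v ≤ ⨆ i, x i

def IsJensenConcave (I : Set ℝ) (M : ∀ n : ℕ, (Fin (n + 1) → ℝ) → (Fin (n + 1) → ℝ) → ℝ) :
    Prop :=
  ∀ (n : ℕ) (x y v : Fin (n + 1) → ℝ), (∀ i, x i ∈ I) → (∀ i, y i ∈ I) →
    (∀ i, 0 ≤ v i) → 0 < ∑ i, v i → (M n x v + M n y v) / 2 ≤ M n (fun i => (x i + y i) / 2) v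

noncomputable def lowerHomogenization (M : ∀ n : ℕ, (Fin (n + 1) → ℝ) → (Fin (n + 1) → ℝ) → ℝ)
    (n : ℕ) (x v : Fin (n + 1) → ℝ) : ℝ :=
  liminf (fun t : ℝ => M n (fun i => t * x i) v / t) (𝓝[>] 0)

def IsHardyConstant (w : ℕ → ℝ) (J : Set ℝ)
    (M : ∀ n : ℕ, (Fin (n + 1) → ℝ) → (Fin (n + 1) → ℝ) → ℝ) (C : ℝ≥0∞) : Prop :=
  ∀ x : ℕ → ℝ, (∀ n, x n ∈ J) →
    ∑' n, ENNReal.ofReal (w n * M n (fun i => x i.val) (fun i => w i.val)) ≤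
      C * ∑' n, ENNReal.ofReal (w n * x n)

theorem exists_Ioc_subset_setOf_ofReal_lt {a : ℝ≥0∞} (ha : 0 < a) :
    ∃ b > 0, Ioc 0 b ⊆ {x : ℝ | 0 < x ∧ ENNReal.ofReal x < a} := by
  obtain ⟨b, -, hb, hba⟩ := ENNReal.lt_iff_exists_real_btwn.1 ha
  exact ⟨b, ENNReal.ofReal_pos.1 hb, fun x hx =>
    ⟨hx.1, (ENNReal.ofReal_le_ofReal hx.2).trans_lt hba⟩⟩

theorem Ioc_subset_setOf_ofReal_lt {a : ℝ≥0∞} {y : ℝ}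
    (hy : y ∈ {x : ℝ | 0 < x ∧ ENNReal.ofReal x < a}) :
    Ioc 0 y ⊆ {x : ℝ | 0 < x ∧ ENNReal.ofReal x < a} :=
  fun _ hx => ⟨hx.1, (ENNReal.ofReal_le_ofReal hx.2).trans_lt hy.2⟩

theorem eventually_mul_mem_Ioc {b c : ℝ} (hb : 0 < b) (hc : 0 < c) :
    ∀ᶠ t in 𝓝[>] (0 : ℝ), t * c ∈ Ioc 0 b := by
  filter_upwards [Ioc_mem_nhdsGT (div_pos hb hc)] with t ht
  exact ⟨mul_pos ht.1 hc, (le_div_iff₀ hc).1 ht.2⟩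

theorem exists_nat_div_two_pow_btwn {a b : ℝ} (ha : 0 ≤ a) (hab : a < b) :
    ∃ m k : ℕ, a < k / 2 ^ m ∧ (k : ℝ) / 2 ^ m < b := by
  obtain ⟨m, hm⟩ := exists_pow_lt_of_lt_one (sub_pos.2 hab) (by norm_num : (2⁻¹ : ℝ) < 1)
  have h2m : (0 : ℝ) < 2 ^ m := by positivity
  refine ⟨m, ⌊a * 2 ^ m⌋₊ + 1, ?_, ?_⟩
  · rw [lt_div_iff₀ h2m]
    exact_mod_cast Nat.lt_floor_add_one _
  · rw [inv_pow] at hm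
    have := Nat.floor_le (mul_nonneg ha h2m.le)
    rw [div_lt_iff₀ h2m]
    push_cast
    nlinarith [mul_inv_cancel₀ h2m.ne']

theorem dyadic_combo_le_of_midpoint_concave {S : Set ℝ} (hS : Convex ℝ S) {φ : ℝ → ℝ}
    (hφ : ∀ s ∈ S, ∀ t ∈ S, (φ s + φ t) / 2 ≤ φ ((s + t) / 2)) {u v : ℝ} (hu : u ∈ S)
    (hv : v ∈ S) (m : ℕ) :
    ∀ k : ℕ, k ≤ 2 ^ m →
      (1 - k / 2 ^ m) * φ u + k / 2 ^ m * φ v ≤ φ ((1 - k / 2 ^ m) * u + k / 2 ^ m * v) := by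
  induction m with
  | zero =>
    intro k hk
    interval_cases k <;> simp
  | succ m ih =>
    intro k hk
    rw [pow_succ] at hk
    have hmem : ∀ j : ℕ, j ≤ 2 ^ m → (1 - j / 2 ^ m) * u + j / 2 ^ m * v ∈ S := by
      intro j hj
      have hj' : (j : ℝ) / 2 ^ m ≤ 1 := by
        rw [div_le_one (by positivity)]
        exact_mod_cast hj
      simpa using hS hu hv (sub_nonneg.2 hj') (by positivity) (sub_add_cancel _ _)
    have hsum : ((k / 2 : ℕ) : ℝ) / 2 ^ m + ((k - k / 2 : ℕ) : ℝ) / 2 ^ m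
        = 2 * (k / 2 ^ (m + 1)) := by
      rw [← add_div, pow_succ, show ((k / 2 : ℕ) : ℝ) + ((k - k / 2 : ℕ) : ℝ) = k by
        exact_mod_cast (by omega : k / 2 + (k - k / 2) = k)]
      field_simp
    calc (1 - k / 2 ^ (m + 1)) * φ u + k / 2 ^ (m + 1) * φ v
        = ((1 - ((k / 2 : ℕ) : ℝ) / 2 ^ m) * φ u + ((k / 2 : ℕ) : ℝ) / 2 ^ m * φ v
          + ((1 - ((k - k / 2 : ℕ) : ℝ) / 2 ^ m) * φ u
            + ((k - k / 2 : ℕ) : ℝ) / 2 ^ m * φ v)) / 2 := by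
          linear_combination (φ u - φ v) / 2 * hsum
      _ ≤ (φ ((1 - ((k / 2 : ℕ) : ℝ) / 2 ^ m) * u + ((k / 2 : ℕ) : ℝ) / 2 ^ m * v)
          + φ ((1 - ((k - k / 2 : ℕ) : ℝ) / 2 ^ m) * u
            + ((k - k / 2 : ℕ) : ℝ) / 2 ^ m * v)) / 2 := by
          gcongr
          · exact ih _ (by omega)
          · exact ih _ (by omega)
      _ ≤ _ := hφ _ (hmem _ (by omega)) _ (hmem _ (by omega))
      _ = _ := by
          congr 1
          linear_combination (v - u) / 2 * hsum

theorem mul_le_of_midpoint_concave_of_nonneg {φ : ℝ → ℝ}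
    (hφ : ∀ s ∈ Ioc (0 : ℝ) 1, ∀ t ∈ Ioc (0 : ℝ) 1, (φ s + φ t) / 2 ≤ φ ((s + t) / 2))
    (hφ0 : ∀ s ∈ Ioc (0 : ℝ) 1, 0 ≤ φ s) {t : ℝ} (ht : t ∈ Ioc (0 : ℝ) 1) :
    t * φ 1 ≤ φ t := by
  have one_mem : (1 : ℝ) ∈ Ioc (0 : ℝ) 1 := ⟨one_pos, le_rfl⟩
  -- Write `t = (1 - l) e + l` with `e ∈ (0, 1]`; concavity at the dyadic weight `l` and
  -- `φ e ≥ 0` give `l φ 1 ≤ φ t`.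
  have dyadic_le : ∀ m k : ℕ, (k : ℝ) / 2 ^ m < t → k / 2 ^ m * φ 1 ≤ φ t := by
    intro m k hkt
    set l : ℝ := k / 2 ^ m with hl
    have hl1 : l < 1 := hkt.trans_le ht.2
    have hk : k ≤ 2 ^ m := by
      have : (k : ℝ) < 2 ^ m := by rwa [hl, div_lt_one (by positivity)] at hl1
      exact_mod_cast this.le
    set e := (t - l) / (1 - l)
    have he : e ∈ Ioc (0 : ℝ) 1 :=
      ⟨div_pos (by linarith) (by linarith), (div_le_one (by linarith)).2 (by linarith [ht.2])⟩
    have hcombo := dyadic_combo_le_of_midpoint_concave (convex_Ioc 0 1) hφ he one_mem m k hk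
    have hte : (1 - l) * e + l * 1 = t := by
      rw [mul_div_cancel₀ _ (sub_ne_zero.2 hl1.ne')]
      ring
    rw [hte] at hcombo
    nlinarith [hφ0 e he]
  by_contra! hlt
  have hφ1 : 0 < φ 1 := by
    by_contra! h
    nlinarith [hφ0 t ht, ht.1]
  obtain ⟨m, k, hk, hkt⟩ :=
    exists_nat_div_two_pow_btwn (div_nonneg (hφ0 t ht) hφ1.le) ((div_lt_iff₀ hφ1).2 hlt)
  have := dyadic_le m k hkt
  rw [div_lt_iff₀ hφ1] at hk
  linarith

theorem sum_ofReal_mul_liminf_le {ι α : Type*} {l : Filter α} [l.NeBot] {s : Finset ι}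
    {w : ι → ℝ} (hw : ∀ i ∈ s, 0 ≤ w i) {f : ι → α → ℝ}
    (hf : ∀ i ∈ s, IsBoundedUnder (· ≥ ·) l (f i)) {K : ℝ≥0∞}
    (h : ∀ᶠ t in l, ∑ i ∈ s, ENNReal.ofReal (w i * f i t) ≤ K) :
    ∑ i ∈ s, ENNReal.ofReal (w i * liminf (f i) l) ≤ K := by
  refine ENNReal.le_of_forall_pos_le_add fun ε hε _ => ?_
  set W := ∑ i ∈ s, w i
  have hW : 0 ≤ W := Finset.sum_nonneg hw
  set η : ℝ := ε / (W + 1)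
  have hη : 0 < η := by positivity
  have hηW : η * W ≤ ε := by
    rw [div_mul_eq_mul_div, div_le_iff₀ (by positivity)]
    nlinarith [ε.2]
  have hev : ∀ᶠ t in l, ∀ i ∈ s, liminf (f i) l - η < f i t :=
    (eventually_all_finset s).2 fun i hi =>
      eventually_lt_of_lt_liminf (sub_lt_self _ hη) (hf i hi)
  obtain ⟨t, hlt, hK⟩ := (hev.and h).exists
  calc ∑ i ∈ s, ENNReal.ofReal (w i * liminf (f i) l)
      ≤ ∑ i ∈ s, (ENNReal.ofReal (w i * f i t) + ENNReal.ofReal (η * w i)) := by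
        refine Finset.sum_le_sum fun i hi => le_trans ?_ ENNReal.ofReal_add_le
        exact ENNReal.ofReal_le_ofReal (by nlinarith [hw i hi, hlt i hi])
    _ = ∑ i ∈ s, ENNReal.ofReal (w i * f i t) + ENNReal.ofReal (η * W) := by
        rw [Finset.sum_add_distrib, Finset.mul_sum,
          ENNReal.ofReal_sum_of_nonneg fun i hi => mul_nonneg hη.le (hw i hi)]
    _ ≤ K + ε := by
        gcongr
        exact ENNReal.ofReal_le_of_le_toReal hηW

section WeightedMean

variable {I : Set ℝ} {M : ∀ n : ℕ, (Fin (n + 1) → ℝ) → (Fin (n + 1) → ℝ) → ℝ}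
  {n : ℕ} {x v : Fin (n + 1) → ℝ}

theorem IsWeightedMean.iInf_le_mul_div (hM : IsWeightedMean I M) {t : ℝ} (ht : 0 < t)
    (hx : ∀ i, t * x i ∈ I) (hv : ∀ i, 0 ≤ v i) (hvs : 0 < ∑ i, v i) :
    (⨅ i, x i) ≤ M n (fun i => t * x i) v / t := by
  rw [le_div_iff₀ ht, mul_comm, Real.mul_iInf_of_nonneg ht.le]
  exact (hM n _ v hx hv hvs).1

theorem IsWeightedMean.mul_div_le_iSup (hM : IsWeightedMean I M) {t : ℝ} (ht : 0 < t)
    (hx : ∀ i, t * x i ∈ I) (hv : ∀ i, 0 ≤ v i) (hvs : 0 < ∑ i, v i) :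
    M n (fun i => t * x i) v / t ≤ ⨆ i, x i := by
  rw [div_le_iff₀ ht, mul_comm _ t, Real.mul_iSup_of_nonneg ht.le]
  exact (hM n _ v hx hv hvs).2

theorem IsWeightedMean.nonneg (hM : IsWeightedMean I M) (hx : ∀ i, x i ∈ I)
    (hx0 : ∀ i, 0 < x i) (hv : ∀ i, 0 ≤ v i) (hvs : 0 < ∑ i, v i) : 0 ≤ M n x v :=
  (le_ciInf fun i => (hx0 i).le).trans (hM n x v hx hv hvs).1

theorem IsWeightedMean.isBoundedUnder_ge_mul_div (hM : IsWeightedMean I M) {b : ℝ} (hb : 0 < b)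
    (hbI : Ioc 0 b ⊆ I) (hx0 : ∀ i, 0 < x i) (hv : ∀ i, 0 ≤ v i) (hvs : 0 < ∑ i, v i) :
    IsBoundedUnder (· ≥ ·) (𝓝[>] 0) (fun t : ℝ => M n (fun i => t * x i) v / t) := by
  refine isBoundedUnder_of_eventually_ge (a := ⨅ i, x i) ?_
  filter_upwards [eventually_all.2 fun i => eventually_mul_mem_Ioc hb (hx0 i),
    self_mem_nhdsWithin] with t ht ht0
  exact hM.iInf_le_mul_div ht0 (fun i => hbI (ht i)) hv hvs

theorem IsJensenConcave.le_lowerHomogenization (hM : IsWeightedMean I M)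
    (hJ : IsJensenConcave I M) (hI : ∀ y ∈ I, Ioc 0 y ⊆ I) (hI0 : I ⊆ Ioi 0)
    (hx : ∀ i, x i ∈ I) (hv : ∀ i, 0 ≤ v i) (hvs : 0 < ∑ i, v i) :
    M n x v ≤ lowerHomogenization M n x v := by
  have hx0 : ∀ i, 0 < x i := fun i => hI0 (hx i)
  have hmem : ∀ s ∈ Ioc (0 : ℝ) 1, ∀ i, s * x i ∈ I := fun s hs i =>
    hI _ (hx i) ⟨mul_pos hs.1 (hx0 i), mul_le_of_le_one_left (hx0 i).le hs.2⟩
  have hle : ∀ s ∈ Ioc (0 : ℝ) 1, s * M n x v ≤ M n (fun i => s * x i) v := fun s hs => by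
    simpa using mul_le_of_midpoint_concave_of_nonneg (φ := fun s => M n (fun i => s * x i) v)
      (fun s hs s' hs' => by
        convert hJ n _ _ v (hmem s hs) (hmem s' hs') hv hvs using 3
        ring)
      (fun s hs => hM.nonneg (hmem s hs) (fun i => mul_pos hs.1 (hx0 i)) hv hvs) hs
  have hcobdd : IsCoboundedUnder (· ≥ ·) (𝓝[>] 0)
      (fun t : ℝ => M n (fun i => t * x i) v / t) := by
    refine (isBoundedUnder_of_eventually_le (a := ⨆ i, x i) ?_).isCoboundedUnder_ge
    filter_upwards [Ioc_mem_nhdsGT one_pos] with t ht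
    exact hM.mul_div_le_iSup ht.1 (hmem t ht) hv hvs
  refine le_liminf_of_le hcobdd ?_
  filter_upwards [Ioc_mem_nhdsGT one_pos] with t ht
  rw [le_div_iff₀ ht.1, mul_comm]
  exact hle t ht

end WeightedMean

theorem IsHardyConstant.to_lowerHomogenization {I : Set ℝ}
    {M : ∀ n : ℕ, (Fin (n + 1) → ℝ) → (Fin (n + 1) → ℝ) → ℝ} (hM : IsWeightedMean I M) {b : ℝ}
    (hb : 0 < b) (hbI : Ioc 0 b ⊆ I) {w : ℕ → ℝ} (hw0 : 0 < w 0) (hw : ∀ n, 0 ≤ w n)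
    {C : ℝ≥0∞} (hC : IsHardyConstant w I M C) :
    IsHardyConstant w (Ioi 0) (lowerHomogenization M) C := by
  intro x hx
  have hws : ∀ n, 0 < ∑ i : Fin (n + 1), w i :=
    fun n => Finset.sum_pos' (fun i _ => hw i) ⟨0, Finset.mem_univ _, hw0⟩
  refine ENNReal.tsum_le_of_sum_range_le fun N => ?_
  refine sum_ofReal_mul_liminf_le (f := fun n t => M n (fun i => t * x i) (fun i => w i) / t)
    (fun n _ => hw n)
    (fun n _ => hM.isBoundedUnder_ge_mul_div hb hbI (fun i => hx i) (fun i => hw i) (hws n)) ?_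
  filter_upwards [(eventually_all_finset (Finset.range N)).2
      fun i _ => eventually_mul_mem_Ioc hb (hx i), self_mem_nhdsWithin] with t htb (ht : 0 < t)
  -- The cut-off keeps the test sequence in `I` and leaves its first `N` terms equal to `t x`.
  set y : ℕ → ℝ := fun k => min (t * x k) b
  have hyI : ∀ k, y k ∈ I := fun k => hbI ⟨lt_min (mul_pos ht (hx k)) hb, min_le_right _ _⟩
  have hy : ∀ n ∈ Finset.range N,
      (fun i : Fin (n + 1) => y i) = fun i : Fin (n + 1) => t * x i := by
    intro n hn
    funext i
    refine min_eq_left (htb i (Finset.mem_range.2 ?_)).2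
    have := Finset.mem_range.1 hn
    omega
  have hyx : ∑' n, ENNReal.ofReal (w n * y n) ≤
      ENNReal.ofReal t * ∑' n, ENNReal.ofReal (w n * x n) := by
    rw [← ENNReal.tsum_mul_left]
    refine ENNReal.tsum_le_tsum fun n => ?_
    rw [← ENNReal.ofReal_mul ht.le, mul_left_comm]
    exact ENNReal.ofReal_le_ofReal (mul_le_mul_of_nonneg_left (min_le_left _ _) (hw n))
  calc ∑ n ∈ Finset.range N, ENNReal.ofReal (w n * (M n (fun i => t * x i) (fun i => w i) / t))
      = ENNReal.ofReal t⁻¹ *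
          ∑ n ∈ Finset.range N, ENNReal.ofReal (w n * M n (fun i => y i) (fun i => w i)) := by
        rw [Finset.mul_sum]
        refine Finset.sum_congr rfl fun n hn => ?_
        rw [hy n hn, ← ENNReal.ofReal_mul (inv_nonneg.2 ht.le), mul_div_assoc', div_eq_inv_mul]
    _ ≤ ENNReal.ofReal t⁻¹ * (C * (ENNReal.ofReal t * ∑' n, ENNReal.ofReal (w n * x n))) := by
        gcongr
        exact (ENNReal.sum_le_tsum _).trans ((hC y hyI).trans (by gcongr))
    _ = C * ∑' n, ENNReal.ofReal (w n * x n) := by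
        rw [mul_left_comm, ← mul_assoc (ENNReal.ofReal t⁻¹),
          ← ENNReal.ofReal_mul (inv_nonneg.2 ht.le), inv_mul_cancel₀ ht.ne', ENNReal.ofReal_one,
          one_mul]

theorem IsHardyConstant.of_lowerHomogenization {I : Set ℝ}
    {M : ∀ n : ℕ, (Fin (n + 1) → ℝ) → (Fin (n + 1) → ℝ) → ℝ} (hM : IsWeightedMean I M)
    (hJ : IsJensenConcave I M) (hI : ∀ y ∈ I, Ioc 0 y ⊆ I) (hI0 : I ⊆ Ioi 0) {w : ℕ → ℝ}
    (hw0 : 0 < w 0) (hw : ∀ n, 0 ≤ w n) {C : ℝ≥0∞}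
    (hC : IsHardyConstant w (Ioi 0) (lowerHomogenization M) C) : IsHardyConstant w I M C := by
  intro x hx
  refine le_trans (ENNReal.tsum_le_tsum fun n => ENNReal.ofReal_le_ofReal ?_)
    (hC x fun n => hI0 (hx n))
  exact mul_le_mul_of_nonneg_left (hJ.le_lowerHomogenization hM hI hI0 (fun i => hx i)
    (fun i => hw i) (Finset.sum_pos' (fun i _ => hw i) ⟨0, Finset.mem_univ _, hw0⟩)) (hw n)

theorem stmt_19_general (a : ℝ≥0∞) (ha : 0 < a)
    (I : Set ℝ) (hI : I = {x : ℝ | 0 < x ∧ ENNReal.ofReal x < a})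
    (M : ∀ n : ℕ, (Fin (n + 1) → ℝ) → (Fin (n + 1) → ℝ) → ℝ)
    -- mean value property
    (hmean : ∀ (n : ℕ) (x v : Fin (n + 1) → ℝ), (∀ i, x i ∈ I) →
      (∀ i, 0 ≤ v i) → 0 < ∑ i, v i →
      (⨅ i, x i) ≤ M n x v ∧ M n x v ≤ ⨆ i, x i)
    -- Jensen concavity
    (hconc : ∀ (n : ℕ) (x y v : Fin (n + 1) → ℝ), (∀ i, x i ∈ I) → (∀ i, y i ∈ I) →
      (∀ i, 0 ≤ v i) → 0 < ∑ i, v i →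
      (M n x v + M n y v) / 2 ≤ M n (fun i => (x i + y i) / 2) v)
    -- lower homogenization
    (Ms : ∀ n : ℕ, (Fin (n + 1) → ℝ) → (Fin (n + 1) → ℝ) → ℝ)
    (hMs : ∀ (n : ℕ) (x v : Fin (n + 1) → ℝ), Ms n x v =
      Filter.liminf (fun t : ℝ => M n (fun i => t * x i) v / t)
        (nhdsWithin 0 (Set.Ioi 0)))
    -- the weight sequence
    (w : ℕ → ℝ) (hw0 : 0 < w 0) (hw : ∀ n, 0 ≤ w n) :
    (∀ C : ℝ≥0∞,
      (∀ x : ℕ → ℝ, (∀ n, x n ∈ I) →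
        (∑' n : ℕ, ENNReal.ofReal (w n *
            M n (fun i => x i.val) (fun i => w i.val))) ≤
          C * ∑' n : ℕ, ENNReal.ofReal (w n * x n)) →
      (∀ x : ℕ → ℝ, (∀ n, 0 < x n) →
        (∑' n : ℕ, ENNReal.ofReal (w n *
            Ms n (fun i => x i.val) (fun i => w i.val))) ≤
          C * ∑' n : ℕ, ENNReal.ofReal (w n * x n))) ∧
    sInf {C : ℝ≥0∞ | ∀ x : ℕ → ℝ, (∀ n, 0 < x n) →
        (∑' n : ℕ, ENNReal.ofReal (w n *
            Ms n (fun i => x i.val) (fun i => w i.val))) ≤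
          C * ∑' n : ℕ, ENNReal.ofReal (w n * x n)} =
      sInf {C : ℝ≥0∞ | ∀ x : ℕ → ℝ, (∀ n, x n ∈ I) →
        (∑' n : ℕ, ENNReal.ofReal (w n *
            M n (fun i => x i.val) (fun i => w i.val))) ≤
          C * ∑' n : ℕ, ENNReal.ofReal (w n * x n)} := by
  obtain rfl : Ms = lowerHomogenization M := funext fun n => funext fun x => funext (hMs n x)
  obtain ⟨b, hb, hbI⟩ : ∃ b > 0, Ioc 0 b ⊆ I := hI ▸ exists_Ioc_subset_setOf_ofReal_lt ha
  have hIdown : ∀ y ∈ I, Ioc 0 y ⊆ I := hI ▸ fun _ => Ioc_subset_setOf_ofReal_lt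
  have hI0 : I ⊆ Ioi 0 := hI ▸ fun _ hy => hy.1
  have to_lower : ∀ C, IsHardyConstant w I M C →
      IsHardyConstant w (Ioi 0) (lowerHomogenization M) C :=
    fun C => IsHardyConstant.to_lowerHomogenization hmean hb hbI hw0 hw
  have of_lower : ∀ C, IsHardyConstant w (Ioi 0) (lowerHomogenization M) C →
      IsHardyConstant w I M C :=
    fun C => IsHardyConstant.of_lowerHomogenization hmean hconc hIdown hI0 hw0 hw
  exact ⟨to_lower, le_antisymm (sInf_le_sInf to_lower) (sInf_le_sInf of_lower)⟩

/-- For a Jensen-concave weighted mean `M` on `I = (0,a)`, every Hardy constant for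
`M` is a Hardy constant for its lower homogenization `M_#`; consequently the
λ-Hardy constant of `M_#` equals that of `M`. -/
theorem stmt_19 (a : ℝ≥0∞) (ha : 0 < a)
    (I : Set ℝ) (hI : I = {x : ℝ | 0 < x ∧ ENNReal.ofReal x < a})
    (M : ∀ n : ℕ, (Fin (n + 1) → ℝ) → (Fin (n + 1) → ℝ) → ℝ)
    -- mean value property
    (hmean : ∀ (n : ℕ) (x v : Fin (n + 1) → ℝ), (∀ i, x i ∈ I) →
      (∀ i, 0 ≤ v i) → 0 < ∑ i, v i →
      (⨅ i, x i) ≤ M n x v ∧ M n x v ≤ ⨆ i, x i)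
    -- nullhomogeneity in the weights
    (hnull : ∀ (n : ℕ) (x v : Fin (n + 1) → ℝ) (t : ℝ), 0 < t →
      M n x (fun i => t * v i) = M n x v)
    -- Jensen concavity
    (hconc : ∀ (n : ℕ) (x y v : Fin (n + 1) → ℝ), (∀ i, x i ∈ I) → (∀ i, y i ∈ I) →
      (∀ i, 0 ≤ v i) → 0 < ∑ i, v i →
      (M n x v + M n y v) / 2 ≤ M n (fun i => (x i + y i) / 2) v)
    -- lower homogenization
    (Ms : ∀ n : ℕ, (Fin (n + 1) → ℝ) → (Fin (n + 1) → ℝ) → ℝ)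
    (hMs : ∀ (n : ℕ) (x v : Fin (n + 1) → ℝ), Ms n x v =
      Filter.liminf (fun t : ℝ => M n (fun i => t * x i) v / t)
        (nhdsWithin 0 (Set.Ioi 0)))
    -- the weight sequence
    (w : ℕ → ℝ) (hw0 : 0 < w 0) (hw : ∀ n, 0 ≤ w n) :
    (∀ C : ℝ≥0∞,
      (∀ x : ℕ → ℝ, (∀ n, x n ∈ I) →
        (∑' n : ℕ, ENNReal.ofReal (w n *
            M n (fun i => x i.val) (fun i => w i.val))) ≤
          C * ∑' n : ℕ, ENNReal.ofReal (w n * x n)) →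
      (∀ x : ℕ → ℝ, (∀ n, 0 < x n) →
        (∑' n : ℕ, ENNReal.ofReal (w n *
            Ms n (fun i => x i.val) (fun i => w i.val))) ≤
          C * ∑' n : ℕ, ENNReal.ofReal (w n * x n))) ∧
    sInf {C : ℝ≥0∞ | ∀ x : ℕ → ℝ, (∀ n, 0 < x n) →
        (∑' n : ℕ, ENNReal.ofReal (w n *
            Ms n (fun i => x i.val) (fun i => w i.val))) ≤
          C * ∑' n : ℕ, ENNReal.ofReal (w n * x n)} =
      sInf {C : ℝ≥0∞ | ∀ x : ℕ → ℝ, (∀ n, x n ∈ I) →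
        (∑' n : ℕ, ENNReal.ofReal (w n *
            M n (fun i => x i.val) (fun i => w i.val))) ≤
          C * ∑' n : ℕ, ENNReal.ofReal (w n * x n)} :=
  stmt_19_general a ha I hI M hmean hconc Ms hMs w hw0 hw
end
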